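/- arXiv:2010.10582 — 4 statements merged into one kernel-verified Lean document; each statement's English description precedes it below -/
import Mathlib

section
/- Let G be a Coxeter diagram with a crystallographic Cartan matrix A and associated root system Φ. Fix elastic data (x, L_x, R_x) and let st_n denote the n-stretching operation on diagrams, Cartan matrices, root systems, and integer-valued vertex functions (replacing vertex x by a path x_0,...,x_n of unlabeled edges, with the function value at x repeated along the path). Then for every root α ∈ Φ, the stretched function st_n(α) is a root of the stretched root system st_n(Φ). -/
open Finset

section Core

variable {V : Type*} [Fintype V] [DecidableEq V]

/-- The simple root at vertex `v`, viewed as an integer-valued function on vertices. -/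
def simpleRoot (v : V) : V → ℤ := fun y => if y = v then 1 else 0

/-- The simple reflection at vertex `v` for the Cartan matrix `A`, acting on
integer-valued vertex functions. -/
def sRef (A : V → V → ℤ) (v : V) (α : V → ℤ) : V → ℤ :=
  fun y => if y = v then α v - ∑ z, A v z * α z else α y

/-- The root system associated to `A`: the closure of the simple roots under all
simple reflections. -/
inductive IsRoot (A : V → V → ℤ) : (V → ℤ) → Prop
  | simple (v : V) : IsRoot A (simpleRoot v)
  | reflect (v : V) {α : V → ℤ} : IsRoot A α → IsRoot A (sRef A v α)

/-- A positive root: a root all of whose coefficients are nonnegative. -/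
def IsPosRoot (A : V → V → ℤ) (α : V → ℤ) : Prop :=
  IsRoot A α ∧ ∀ v, 0 ≤ α v

/-- Cover relation of the root poset of Björner–Brenti: `γ = s_v β` with
`s_v β - β` a positive multiple of the simple root at `v`. -/
def Covers (A : V → V → ℤ) (β γ : V → ℤ) : Prop :=
  ∃ v, γ = sRef A v β ∧ β v < γ v

/-- The order relation of the root poset. -/
def RootLe (A : V → V → ℤ) : (V → ℤ) → (V → ℤ) → Prop :=
  Relation.ReflTransGen (Covers A)

/-- `α` admits an expression of length `k` (counting the starting simple root)
as simple reflections applied to a simple root. -/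
def HasExpr (A : V → V → ℤ) (α : V → ℤ) (k : ℕ) : Prop :=
  ∃ (v : V) (w : List V), w.length + 1 = k ∧ α = w.foldr (sRef A) (simpleRoot v)

/-- The depth of a positive root: the minimal length of an expression for it,
counting the starting simple root. -/
noncomputable def depth (A : V → V → ℤ) (α : V → ℤ) : ℕ := sInf {k | HasExpr A α k}

/-- `A` is a crystallographic Cartan matrix for a Coxeter diagram. -/
structure IsCartan (A : V → V → ℤ) : Prop where
  diag : ∀ v, A v v = 2
  offdiag : ∀ v w, v ≠ w → A v w ≤ 0
  symm_zero : ∀ v w, A v w = 0 → A w v = 0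

/-- Elastic data at the vertex `x`: a partition `L ⊔ R` of the neighbors of `x`. -/
structure IsElastic (A : V → V → ℤ) (x : V) (L R : Finset V) : Prop where
  disj : Disjoint L R
  union : ∀ y, y ∈ L ∪ R ↔ y ≠ x ∧ A x y ≠ 0

/-- The vertex set of the `n`-stretched diagram: `x` is replaced by the
path `x_0, …, x_n`, all other vertices kept. -/
abbrev StV (V : Type*) [DecidableEq V] (x : V) (n : ℕ) := {y : V // y ≠ x} ⊕ Fin (n + 1)

/-- The `n`-stretched Cartan matrix. -/
def stA (A : V → V → ℤ) (x : V) (L R : Finset V) (n : ℕ) :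
    StV V x n → StV V x n → ℤ := fun v w =>
  match v, w with
  | Sum.inl y, Sum.inl z => A y.1 z.1
  | Sum.inl y, Sum.inr i =>
      if (i = 0 ∧ y.1 ∈ L) ∨ (i = Fin.last n ∧ y.1 ∈ R) then A y.1 x else 0
  | Sum.inr i, Sum.inl y =>
      if (i = 0 ∧ y.1 ∈ L) ∨ (i = Fin.last n ∧ y.1 ∈ R) then A x y.1 else 0
  | Sum.inr i, Sum.inr j =>
      if i = j then 2 else if (i : ℕ) + 1 = (j : ℕ) ∨ (j : ℕ) + 1 = (i : ℕ) then -1 else 0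

/-- The `n`-stretch of an integer-valued vertex function: the value at `x` is
repeated along the stretched path. -/
def stRoot (x : V) (n : ℕ) (α : V → ℤ) : StV V x n → ℤ := fun v =>
  match v with
  | Sum.inl y => α y.1
  | Sum.inr _ => α x

end Core

/-!
Reflections at vertices `v ≠ x` commute with stretching: the path `x_0, …, x_n` pairs with an
old vertex `y` through `A y x` in total, so against a function constant on the path it
contributes exactly `A y x * α x`.

For the reflection at `x`, record a function on the path as `f : ℤ → ℤ` with `f (-1)` and
`f (n + 1)` the negated contributions of `L` and `R`. The reflection at `x_k` is then the type `A`
move `f k ↦ f (k - 1) + f (k + 1) - f k`. Starting from the constant value `α x`, reflecting at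
`x_0, …, x_{n-1}` turns the path into `f (-1)` one vertex at a time, the reflection at `x_n`
produces `f (-1) + f (n + 1) - α x = (s_x α) x`, and reflecting back at `x_{n-1}, …, x_0`
spreads this value along the whole path. The stretched simple root at `x` arises in the same
way from the simple root at `x_n`.
-/

section Stretch

variable {V : Type*} [DecidableEq V] {A : V → V → ℤ} {x : V} {L R : Finset V} {n : ℕ}

lemma sum_fin_ite_val_eq {M : Type*} [AddCommMonoid M] (m c : ℕ) (v : M) :
    ∑ j : Fin m, (if (j : ℕ) = c then v else 0) = if c < m then v else 0 := by
  simp only [Fin.sum_univ_eq_sum_range (fun j => if j = c then v else 0), sum_ite_eq', mem_range]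

def pathFun (x : V) (n : ℕ) (g : V → ℤ) (f : ℤ → ℤ) : StV V x n → ℤ
  | Sum.inl y => g y.1
  | Sum.inr i => f i

def pathRefl (f : ℤ → ℤ) (k : ℤ) : ℤ → ℤ :=
  Function.update f k (f (k - 1) + f (k + 1) - f k)

def band (m n : ℕ) (lo b hi : ℤ) (i : ℤ) : ℤ :=
  if i < m then lo else if i ≤ n then b else hi

lemma pathRefl_band_self {m : ℕ} (hm : m < n) (lo b hi : ℤ) :
    pathRefl (band m n lo b hi) m = band (m + 1) n lo b hi := by
  funext i
  simp only [pathRefl, band, Function.update_apply]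
  split_ifs <;> omega

lemma pathRefl_band_succ {m : ℕ} (hm : m < n) (lo b hi : ℤ) :
    pathRefl (band (m + 1) n lo b hi) m = band m n lo b hi := by
  funext i
  simp only [pathRefl, band, Function.update_apply]
  split_ifs <;> omega

lemma pathRefl_band_last (lo b hi : ℤ) :
    pathRefl (band n n lo b hi) n = band n n lo (lo + hi - b) hi := by
  funext i
  simp only [pathRefl, band, Function.update_apply]
  split_ifs <;> omega

lemma IsElastic.notMem_left (hE : IsElastic A x L R) : x ∉ L :=
  fun h => ((hE.union x).mp (mem_union_left _ h)).1 rfl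

lemma IsElastic.notMem_right (hE : IsElastic A x L R) : x ∉ R :=
  fun h => ((hE.union x).mp (mem_union_right _ h)).1 rfl

lemma stRoot_eq_pathFun_band {g g' : V → ℤ} (h : ∀ y ≠ x, g' y = g y) (lo hi : ℤ) :
    stRoot x n g' = pathFun x n g (band 0 n lo (g' x) hi) := by
  funext w
  rcases w with y | j
  · exact h y.1 y.2
  · have hj := j.isLt
    simp only [stRoot, pathFun, band]
    split_ifs <;> omega

lemma stRoot_simpleRoot_of_ne {v : V} (hv : v ≠ x) :
    stRoot x n (simpleRoot v) = simpleRoot (Sum.inl ⟨v, hv⟩ : StV V x n) := by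
  funext w
  rcases w with y | j
  · simp [stRoot, simpleRoot, Subtype.ext_iff]
  · simp [stRoot, simpleRoot, hv.symm]

lemma sum_stA_inr_inr_mul (k : Fin (n + 1)) (f : ℤ → ℤ) :
    ∑ j, stA A x L R n (Sum.inr k) (Sum.inr j) * f j =
      2 * f k - (if 0 < (k : ℕ) then f (k - 1) else 0) -
        (if (k : ℕ) < n then f (k + 1) else 0) := by
  have hterm : ∀ j : Fin (n + 1), stA A x L R n (Sum.inr k) (Sum.inr j) * f j =
      (if (j : ℕ) = k then 2 * f k else 0) - (if (j : ℕ) + 1 = k then f (k - 1) else 0) -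
        (if (j : ℕ) = k + 1 then f (k + 1) else 0) := by
    intro j
    simp only [stA, Fin.ext_iff]
    generalize (j : ℕ) = a, (k : ℕ) = b
    split_ifs <;> subst_vars <;> first | omega | (push_cast; ring_nf)
  have hk := k.isLt
  simp only [hterm, sum_sub_distrib, sum_fin_ite_val_eq, hk, if_true]
  congr 1
  · rcases hk0 : (k : ℕ) with _ | k'
    · simp
    · simp [sum_fin_ite_val_eq, show k' < n + 1 by omega]
  · simp only [Nat.add_lt_add_iff_right]

lemma sum_stA_inl_inr (hA : IsCartan A) (hE : IsElastic A x L R) (y : {y : V // y ≠ x}) :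
    ∑ i, stA A x L R n (Sum.inl y) (Sum.inr i) = A y x := by
  simp only [stA]
  by_cases hL : y.1 ∈ L
  · have hR : y.1 ∉ R := disjoint_left.mp hE.disj hL
    simp [hL, hR]
  by_cases hR : y.1 ∈ R
  · simp [hL, hR]
  · have hxy : A x y = 0 := by
      by_contra hne
      simpa [hL, hR] using (hE.union y).mpr ⟨y.2, hne⟩
    simp [hL, hR, hA.symm_zero x y hxy]

variable [Fintype V]

lemma sum_subtype_ne_ite_mem {S : Finset V} (hS : x ∉ S) (h : V → ℤ) :
    ∑ y : {y : V // y ≠ x}, (if y.1 ∈ S then h y.1 else 0) = ∑ y ∈ S, h y := by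
  rw [← Finset.sum_subtype (univ.erase x) (p := (· ≠ x)) (by simp)
    (fun y => if y ∈ S then h y else 0), Finset.sum_ite_mem,
    Finset.inter_eq_right.mpr fun y hy => mem_erase.mpr ⟨ne_of_mem_of_not_mem hy hS, mem_univ y⟩]

lemma IsElastic.sum_mul_eq (hA : IsCartan A) (hE : IsElastic A x L R) (g : V → ℤ) :
    ∑ z, A x z * g z = 2 * g x + ∑ y ∈ L, A x y * g y + ∑ y ∈ R, A x y * g y := by
  have hrest : ∑ z ∈ univ.erase x, A x z * g z = ∑ z ∈ L ∪ R, A x z * g z := by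
    refine (Finset.sum_subset (fun z hz => ?_) fun z hz hzLR => ?_).symm
    · exact mem_erase.mpr ⟨((hE.union z).mp hz).1, mem_univ z⟩
    · have : A x z = 0 := by
        by_contra hne
        exact hzLR ((hE.union z).mpr ⟨(mem_erase.mp hz).1, hne⟩)
      rw [this, zero_mul]
  rw [← add_sum_erase _ _ (mem_univ x), hrest, sum_union hE.disj, hA.diag]
  ring

lemma IsElastic.sRef_self_apply (hA : IsCartan A) (hE : IsElastic A x L R) (g : V → ℤ) :
    sRef A x g x = -∑ y ∈ L, A x y * g y + -∑ y ∈ R, A x y * g y - g x := by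
  rw [sRef, if_pos rfl, hE.sum_mul_eq hA]
  ring

lemma sum_stA_inr_inl_mul (hE : IsElastic A x L R) (k : Fin (n + 1)) (g : V → ℤ) :
    ∑ y, stA A x L R n (Sum.inr k) (Sum.inl y) * g y.1 =
      (if (k : ℕ) = 0 then ∑ y ∈ L, A x y * g y else 0) +
        (if (k : ℕ) = n then ∑ y ∈ R, A x y * g y else 0) := by
  have hterm : ∀ y : {y : V // y ≠ x}, stA A x L R n (Sum.inr k) (Sum.inl y) * g y.1 =
      (if (k : ℕ) = 0 then (if y.1 ∈ L then A x y.1 * g y.1 else 0) else 0) +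
        (if (k : ℕ) = n then (if y.1 ∈ R then A x y.1 * g y.1 else 0) else 0) := by
    intro y
    have hLR : y.1 ∈ L → y.1 ∉ R := fun h => disjoint_left.mp hE.disj h
    simp only [stA, Fin.ext_iff, Fin.val_zero, Fin.val_last]
    by_cases hL : y.1 ∈ L <;> by_cases hR : y.1 ∈ R <;> simp_all
  simp only [hterm, sum_add_distrib]
  congr 1 <;> split_ifs
  · exact sum_subtype_ne_ite_mem hE.notMem_left fun y => A x y * g y
  · exact sum_const_zero
  · exact sum_subtype_ne_ite_mem hE.notMem_right fun y => A x y * g y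
  · exact sum_const_zero

lemma sum_stA_inr_mul_pathFun (hE : IsElastic A x L R) (k : Fin (n + 1)) (g : V → ℤ)
    (f : ℤ → ℤ) (hlo : f (-1) = -∑ y ∈ L, A x y * g y)
    (hhi : f (n + 1) = -∑ y ∈ R, A x y * g y) :
    ∑ w, stA A x L R n (Sum.inr k) w * pathFun x n g f w = 2 * f k - f (k - 1) - f (k + 1) := by
  rw [Fintype.sum_sum_type]
  simp only [pathFun, sum_stA_inr_inl_mul hE, sum_stA_inr_inr_mul]
  have hk := k.isLt
  generalize (k : ℕ) = m at *
  split_ifs <;> subst_vars <;> first | omega | (push_cast at *; linarith)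

lemma sRef_inr_pathFun (hE : IsElastic A x L R) (k : Fin (n + 1)) (g : V → ℤ)
    (f : ℤ → ℤ) (hlo : f (-1) = -∑ y ∈ L, A x y * g y)
    (hhi : f (n + 1) = -∑ y ∈ R, A x y * g y) :
    sRef (stA A x L R n) (Sum.inr k) (pathFun x n g f) = pathFun x n g (pathRefl f k) := by
  funext w
  rcases w with y | j
  · simp [sRef, pathFun]
  · by_cases hjk : j = k
    · subst hjk
      rw [sRef, if_pos rfl, sum_stA_inr_mul_pathFun hE j g f hlo hhi]
      simp only [pathFun, pathRefl, Function.update_self]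
      ring
    · have hjk' : ((j : ℕ) : ℤ) ≠ (k : ℕ) := by simpa [Fin.ext_iff] using hjk
      simp [sRef, pathFun, pathRefl, hjk, Function.update_of_ne hjk']

lemma IsRoot.pathRefl (hE : IsElastic A x L R) {g : V → ℤ} {f : ℤ → ℤ}
    (h : IsRoot (stA A x L R n) (pathFun x n g f)) (hlo : f (-1) = -∑ y ∈ L, A x y * g y)
    (hhi : f (n + 1) = -∑ y ∈ R, A x y * g y) (k : Fin (n + 1)) :
    IsRoot (stA A x L R n) (pathFun x n g (pathRefl f k)) :=
  sRef_inr_pathFun hE k g f hlo hhi ▸ h.reflect _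

lemma isRoot_pathFun_band_iff (hE : IsElastic A x L R) {g : V → ℤ} {lo b hi : ℤ}
    (hlo : lo = -∑ y ∈ L, A x y * g y) (hhi : hi = -∑ y ∈ R, A x y * g y) {m : ℕ}
    (hm : m ≤ n) :
    IsRoot (stA A x L R n) (pathFun x n g (band m n lo b hi)) ↔
      IsRoot (stA A x L R n) (pathFun x n g (band 0 n lo b hi)) := by
  induction m with
  | zero => rfl
  | succ m ih =>
    have hb : ∀ m', band m' n lo b hi (-1) = lo := fun m' => if_pos (by omega)
    have ht : ∀ m' ≤ n, band m' n lo b hi (n + 1) = hi := fun m' hm' => by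
      simp only [band]; split_ifs <;> omega
    rw [← ih (by omega)]
    constructor
    · intro h
      simpa only [pathRefl_band_succ hm] using
        h.pathRefl hE ((hb _).trans hlo) ((ht _ hm).trans hhi) ⟨m, by omega⟩
    · intro h
      simpa only [pathRefl_band_self hm] using
        h.pathRefl hE ((hb _).trans hlo) ((ht _ (by omega)).trans hhi) ⟨m, by omega⟩

lemma isRoot_stRoot_sRef_self (hA : IsCartan A) (hE : IsElastic A x L R) {g : V → ℤ}
    (h : IsRoot (stA A x L R n) (stRoot x n g)) :
    IsRoot (stA A x L R n) (stRoot x n (sRef A x g)) := by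
  set lo := -∑ y ∈ L, A x y * g y
  set hi := -∑ y ∈ R, A x y * g y
  rw [stRoot_eq_pathFun_band (fun _ _ => rfl) lo hi] at h
  have hlast := ((isRoot_pathFun_band_iff hE rfl rfl le_rfl).mpr h).pathRefl hE
    (if_pos (by omega)) (by simp [band]) (Fin.last n)
  rw [Fin.val_last, pathRefl_band_last] at hlast
  rw [stRoot_eq_pathFun_band (g' := sRef A x g) (g := g) (fun y hy => if_neg hy) lo hi,
    hE.sRef_self_apply hA]
  exact (isRoot_pathFun_band_iff hE rfl rfl le_rfl).mp hlast

lemma isRoot_stRoot_simpleRoot_self (hE : IsElastic A x L R) :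
    IsRoot (stA A x L R n) (stRoot x n (simpleRoot x)) := by
  have hsimple : simpleRoot (Sum.inr (Fin.last n)) =
      pathFun x n (fun _ => 0) (band n n 0 1 0) := by
    funext w
    rcases w with y | j
    · simp [simpleRoot, pathFun]
    · have hj := j.isLt
      simp only [simpleRoot, pathFun, band, Sum.inr.injEq, Fin.ext_iff, Fin.val_last]
      split_ifs <;> omega
  rw [stRoot_eq_pathFun_band (g' := simpleRoot x) (g := fun _ => 0) (fun y hy => if_neg hy) 0 0,
    simpleRoot, if_pos rfl, ← isRoot_pathFun_band_iff hE (by simp) (by simp) le_rfl, ← hsimple]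
  exact IsRoot.simple _

lemma sum_stA_inl_mul_stRoot (hA : IsCartan A) (hE : IsElastic A x L R) (y : {y : V // y ≠ x})
    (g : V → ℤ) :
    ∑ w, stA A x L R n (Sum.inl y) w * stRoot x n g w = ∑ z, A y z * g z := by
  rw [Fintype.sum_sum_type, Fintype.sum_eq_add_sum_subtype_ne _ x, add_comm]
  simp only [stRoot, ← sum_mul, sum_stA_inl_inr hA hE]
  rfl

lemma stRoot_sRef_of_ne (hA : IsCartan A) (hE : IsElastic A x L R) {v : V} (hv : v ≠ x)
    (g : V → ℤ) :
    stRoot x n (sRef A v g) = sRef (stA A x L R n) (Sum.inl ⟨v, hv⟩) (stRoot x n g) := by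
  funext w
  rcases w with y | j
  · by_cases hy : y.1 = v
    · obtain rfl : y = ⟨v, hv⟩ := Subtype.ext hy
      rw [sRef, if_pos rfl, sum_stA_inl_mul_stRoot hA hE ⟨v, hv⟩ g]
      simp [stRoot, sRef]
    · simp [sRef, stRoot, hy, Subtype.ext_iff]
  · simp [sRef, stRoot, hv.symm]

end Stretch

/-- stretching a root of `Φ` gives a root of the stretched root system. -/
theorem stretch_of_root {V : Type*} [Fintype V] [DecidableEq V]
    (A : V → V → ℤ) (hA : IsCartan A) (x : V) (L R : Finset V)
    (hE : IsElastic A x L R) (n : ℕ) (α : V → ℤ) (hα : IsRoot A α) :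
    IsRoot (stA A x L R n) (stRoot x n α) := by
  induction hα with
  | simple v =>
    by_cases hv : v = x
    · subst hv
      exact isRoot_stRoot_simpleRoot_self hE
    · exact stRoot_simpleRoot_of_ne hv ▸ IsRoot.simple _
  | reflect v _ ih =>
    by_cases hv : v = x
    · subst hv
      exact isRoot_stRoot_sRef_self hA hE ih
    · exact stRoot_sRef_of_ne hA hE hv _ ▸ ih.reflect _
end

section
/- For a symbol alphabet, define a 'pattern' to be an expression a_1^{e_1} ⋯ a_k^{e_k} where no two consecutive a_i are equal and each exponent e_i is either a fixed positive integer m_i (matching exactly m_i copies) or '≥ m_i' (matching at least m_i copies), with the '≥' exponents occurring on a consecutive block of indices. Then the intersection of the languages defined by two such patterns is either empty, a single word, or the language of another such pattern. -/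
/-- A pattern `a_1^{e_1} ⋯ a_k^{e_k}`: a list of blocks `(aᵢ, mᵢ, bᵢ)`, where `bᵢ = true`
means the exponent is `≥ mᵢ` and `bᵢ = false` means exactly `mᵢ`; no two consecutive
symbols are equal, each `mᵢ` is positive, and the `≥` exponents occur on a consecutive
block of indices. -/
structure Pattern (α : Type*) where
  blocks : List (α × ℕ × Bool)
  pos : ∀ b ∈ blocks, 0 < b.2.1
  consec_ne : blocks.Chain' (fun b c => b.1 ≠ c.1)
  geq_consecutive : ∃ r s : ℕ, ∀ i (h : i < blocks.length),
    (blocks.get ⟨i, h⟩).2.2 = true ↔ r ≤ i ∧ i < s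

/-- A word matches a pattern if it is the concatenation of a block of copies of `a₁`,
then of `a₂`, etc., where the number of copies of `aᵢ` is exactly `mᵢ` (exact
exponent) or at least `mᵢ` (`≥` exponent). -/
def Pattern.Matches {α : Type*} (p : Pattern α) (w : List α) : Prop :=
  ∃ counts : List ℕ, counts.length = p.blocks.length ∧
    (∀ i (h : i < p.blocks.length),
      if (p.blocks.get ⟨i, h⟩).2.2 = true then
        (p.blocks.get ⟨i, h⟩).2.1 ≤ counts.getD i 0
      else counts.getD i 0 = (p.blocks.get ⟨i, h⟩).2.1) ∧
    w = (p.blocks.zip counts).flatMap fun bc => List.replicate bc.2 bc.1.1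

/-!
A word determines its decomposition into maximal runs of equal letters, since consecutive
symbols of a pattern differ and all exponents are positive. So if two patterns have a common
word, they have the same sequence of symbols, and any word in both languages has the same run
lengths when read in either pattern. The intersection is then the pattern with these symbols
whose `i`-th exponent is the conjunction of the two `i`-th exponents; its `≥` exponents sit on
the intersection of two intervals of indices, hence again on an interval.
-/

namespace List

variable {α : Type*}

def expandRuns (l : List (α × ℕ)) : List α := l.flatMap fun x => replicate x.2 x.1

@[simp] lemma expandRuns_cons (a : α) (n : ℕ) (l : List (α × ℕ)) :
    expandRuns ((a, n) :: l) = replicate n a ++ expandRuns l := rfl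

lemma head?_expandRuns {l : List (α × ℕ)} (hl : ∀ x ∈ l, 0 < x.2) :
    (expandRuns l).head? = l.head?.map Prod.fst := by
  rcases l with _ | ⟨⟨a, n⟩, l⟩
  · rfl
  · obtain ⟨k, rfl⟩ := Nat.exists_eq_add_of_lt (hl _ mem_cons_self)
    simp [replicate_succ]

lemma replicate_append_inj {a : α} {m n : ℕ} {u v : List α}
    (hu : u.head? ≠ some a) (hv : v.head? ≠ some a)
    (h : replicate m a ++ u = replicate n a ++ v) : m = n ∧ u = v := by
  wlog hmn : m ≤ n generalizing m n u v
  · obtain ⟨hnm, hvu⟩ := this hv hu h.symm (by omega)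
    exact ⟨hnm.symm, hvu.symm⟩
  obtain ⟨k, rfl⟩ := Nat.exists_eq_add_of_le hmn
  rw [← replicate_append_replicate, append_assoc, append_cancel_left_eq] at h
  rcases k with _ | k
  · simpa using h
  · exact absurd (by simp [h, replicate_succ]) hu

lemma head?_expandRuns_ne_of_isChain {a : α} {m : ℕ} {l : List (α × ℕ)}
    (hl : ∀ x ∈ l, 0 < x.2) (hne : ((a, m) :: l).IsChain (·.1 ≠ ·.1)) :
    (expandRuns l).head? ≠ some a := by
  rw [head?_expandRuns hl]
  rcases l with _ | ⟨⟨b, n⟩, l⟩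
  · simp
  · simpa [eq_comm] using (isChain_cons_cons.mp hne).1

lemma eq_of_expandRuns_eq {l₁ l₂ : List (α × ℕ)}
    (hpos₁ : ∀ x ∈ l₁, 0 < x.2) (hpos₂ : ∀ x ∈ l₂, 0 < x.2)
    (hne₁ : l₁.IsChain (·.1 ≠ ·.1)) (hne₂ : l₂.IsChain (·.1 ≠ ·.1))
    (h : expandRuns l₁ = expandRuns l₂) : l₁ = l₂ := by
  induction l₁ generalizing l₂ with
  | nil =>
    have := congrArg head? h
    rw [head?_expandRuns hpos₁, head?_expandRuns hpos₂] at this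
    simpa [eq_comm] using this
  | cons x t ih =>
    obtain ⟨a, m⟩ := x
    have hpos_t : ∀ x ∈ t, 0 < x.2 := fun x hx => hpos₁ x (mem_cons_of_mem _ hx)
    have hhead := congrArg head? h
    rw [head?_expandRuns hpos₁, head?_expandRuns hpos₂] at hhead
    rcases l₂ with _ | ⟨⟨b, n⟩, t₂⟩
    · simp at hhead
    have hpos_t₂ : ∀ x ∈ t₂, 0 < x.2 := fun x hx => hpos₂ x (mem_cons_of_mem _ hx)
    obtain rfl : a = b := by simpa using hhead
    obtain ⟨rfl, ht⟩ := replicate_append_inj (head?_expandRuns_ne_of_isChain hpos_t hne₁)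
      (head?_expandRuns_ne_of_isChain hpos_t₂ hne₂) h
    rw [ih hpos_t hpos_t₂ hne₁.tail hne₂.tail ht]

end List

namespace Pattern

variable {α : Type*}

open List

def symbols (p : Pattern α) : List α := p.blocks.map Prod.fst

def BlockAdmits (b : α × ℕ × Bool) (n : ℕ) : Prop :=
  if b.2.2 then b.2.1 ≤ n else n = b.2.1

lemma matches_iff {p : Pattern α} {w : List α} :
    p.Matches w ↔
      ∃ c, Forall₂ BlockAdmits p.blocks c ∧ w = expandRuns (p.symbols.zip c) := by
  simp only [Matches, forall₂_iff_get, symbols, expandRuns, zip_map_left, flatMap_map]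
  refine exists_congr fun c => ?_
  constructor
  · rintro ⟨hlen, hadm, rfl⟩
    refine ⟨⟨hlen.symm, fun i h₁ h₂ => ?_⟩, rfl⟩
    simpa [BlockAdmits, getElem?_eq_getElem h₂] using hadm i h₁
  · rintro ⟨⟨hlen, hadm⟩, rfl⟩
    refine ⟨hlen.symm, fun i h₁ => ?_, rfl⟩
    simpa [BlockAdmits, getElem?_eq_getElem (hlen ▸ h₁)] using hadm i h₁ (hlen ▸ h₁)

lemma BlockAdmits.pos {b : α × ℕ × Bool} {n : ℕ} (h : BlockAdmits b n) (hb : 0 < b.2.1) :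
    0 < n := by
  unfold BlockAdmits at h
  split_ifs at h <;> omega

lemma pos_of_mem_zip_symbols {p : Pattern α} {c : List ℕ}
    (hc : Forall₂ BlockAdmits p.blocks c) :
    ∀ x ∈ p.symbols.zip c, 0 < x.2 := by
  simp only [symbols, zip_map_left, mem_map, forall_exists_index, and_imp]
  rintro _ ⟨b, n⟩ hbn rfl
  exact (forall₂_zip hc hbn).pos (p.pos b (of_mem_zip hbn).1)

lemma isChain_zip_symbols (p : Pattern α) {c : List ℕ} (hc : p.blocks.length = c.length) :
    (p.symbols.zip c).IsChain (·.1 ≠ ·.1) := by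
  rw [← isChain_map Prod.fst, map_fst_zip (by simpa [symbols] using hc.le)]
  exact (isChain_map _).mpr p.consec_ne

lemma eq_of_expandRuns_zip_eq {p q : Pattern α} {c d : List ℕ}
    (hc : Forall₂ BlockAdmits p.blocks c) (hd : Forall₂ BlockAdmits q.blocks d)
    (h : expandRuns (p.symbols.zip c) = expandRuns (q.symbols.zip d)) :
    p.symbols = q.symbols ∧ c = d := by
  have hzip := List.eq_of_expandRuns_eq (pos_of_mem_zip_symbols hc) (pos_of_mem_zip_symbols hd)
    (p.isChain_zip_symbols hc.length_eq) (q.isChain_zip_symbols hd.length_eq) h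
  have hunzip := congrArg unzip hzip
  rwa [unzip_zip (by simpa [symbols] using hc.length_eq),
    unzip_zip (by simpa [symbols] using hd.length_eq), Prod.mk.injEq] at hunzip

/-- Admits exactly the counts admitted by both `b` and `c`, as long as `b` and `c` have a
common admitted count. -/
def meetBlock (b c : α × ℕ × Bool) : α × ℕ × Bool :=
  (b.1, if b.2.2 then (if c.2.2 then max b.2.1 c.2.1 else c.2.1) else b.2.1, b.2.2 && c.2.2)

lemma blockAdmits_meetBlock_iff {b c : α × ℕ × Bool} {n₀ n : ℕ}
    (hb : BlockAdmits b n₀) (hc : BlockAdmits c n₀) :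
    BlockAdmits (meetBlock b c) n ↔ BlockAdmits b n ∧ BlockAdmits c n := by
  obtain ⟨a, m, _ | _⟩ := b <;> obtain ⟨a', m', _ | _⟩ := c <;>
    simp_all [BlockAdmits, meetBlock]

lemma forall₂_zipWith_meetBlock_iff {bs cs : List (α × ℕ × Bool)} {n₀ : List ℕ}
    (hb : Forall₂ BlockAdmits bs n₀) (hc : Forall₂ BlockAdmits cs n₀) {n : List ℕ} :
    Forall₂ BlockAdmits (zipWith meetBlock bs cs) n ↔
      Forall₂ BlockAdmits bs n ∧ Forall₂ BlockAdmits cs n := by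
  induction hb generalizing cs n with
  | nil => cases hc; simp
  | cons hbx _ ih =>
    cases hc with
    | cons hcx hcs =>
      cases n with
      | nil => simp
      | cons k n =>
        simp only [zipWith_cons_cons, forall₂_cons, blockAdmits_meetBlock_iff hbx hcx, ih hcs]
        tauto

lemma map_fst_zipWith_meetBlock (bs cs : List (α × ℕ × Bool)) :
    (zipWith meetBlock bs cs).map Prod.fst = (bs.map Prod.fst).take cs.length := by
  apply ext_getElem
  · simp [Nat.min_comm]
  · simp [meetBlock]

def meet (p q : Pattern α) : Pattern α where
  blocks := zipWith meetBlock p.blocks q.blocks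
  pos := by
    intro b hb
    obtain ⟨i, hi, rfl⟩ := mem_iff_getElem.mp hb
    simp only [length_zipWith] at hi
    have hp := p.pos _ (getElem_mem (show i < p.blocks.length by omega))
    have hq := q.pos _ (getElem_mem (show i < q.blocks.length by omega))
    simp only [getElem_zipWith, meetBlock]
    split_ifs <;> omega
  consec_ne := by
    rw [Chain', ← isChain_map Prod.fst, map_fst_zipWith_meetBlock]
    exact ((isChain_map _).mpr p.consec_ne).take _
  geq_consecutive := by
    obtain ⟨rp, sp, hp⟩ := p.geq_consecutive
    obtain ⟨rq, sq, hq⟩ := q.geq_consecutive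
    refine ⟨max rp rq, min sp sq, fun i hi => ?_⟩
    simp only [length_zipWith] at hi
    have hpi := hp i (by omega)
    have hqi := hq i (by omega)
    simp only [get_eq_getElem, getElem_zipWith, meetBlock, Bool.and_eq_true] at hpi hqi ⊢
    rw [hpi, hqi]
    omega

lemma symbols_meet {p q : Pattern α} (h : p.blocks.length ≤ q.blocks.length) :
    (p.meet q).symbols = p.symbols := by
  rw [symbols, meet, map_fst_zipWith_meetBlock, take_of_length_le (by simpa using h), symbols]

theorem matches_meet_iff {p q : Pattern α} {w₀ : List α}
    (hp : p.Matches w₀) (hq : q.Matches w₀) {w : List α} :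
    (p.meet q).Matches w ↔ p.Matches w ∧ q.Matches w := by
  obtain ⟨c₀, hc₀, rfl⟩ := matches_iff.mp hp
  obtain ⟨d₀, hd₀, hw₀⟩ := matches_iff.mp hq
  obtain ⟨hsym, rfl⟩ := eq_of_expandRuns_zip_eq hc₀ hd₀ hw₀
  have hsym_meet : (p.meet q).symbols = p.symbols :=
    symbols_meet (by simpa [symbols] using (congrArg length hsym).le)
  simp only [matches_iff, hsym_meet]
  constructor
  · rintro ⟨c, hc, rfl⟩
    obtain ⟨hcp, hcq⟩ := (forall₂_zipWith_meetBlock_iff hc₀ hd₀).mp hc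
    exact ⟨⟨c, hcp, rfl⟩, c, hcq, by rw [hsym]⟩
  · rintro ⟨⟨c, hcp, rfl⟩, d, hdq, hw⟩
    obtain ⟨-, rfl⟩ := eq_of_expandRuns_zip_eq hcp hdq hw
    exact ⟨c, (forall₂_zipWith_meetBlock_iff hc₀ hd₀).mpr ⟨hcp, hdq⟩, rfl⟩

end Pattern

/-- the intersection of the languages of two patterns is empty, a
single word, or the language of another pattern. -/
theorem pattern_inter {α : Type*} (p q : Pattern α) :
    ({w | p.Matches w} ∩ {w | q.Matches w} = ∅) ∨
    (∃ w, {w | p.Matches w} ∩ {w | q.Matches w} = {w}) ∨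
    (∃ r : Pattern α, {w | p.Matches w} ∩ {w | q.Matches w} = {w | r.Matches w}) := by
  obtain h | ⟨w₀, hp, hq⟩ := ({w | p.Matches w} ∩ {w | q.Matches w}).eq_empty_or_nonempty
  · exact Or.inl h
  · exact Or.inr (Or.inr ⟨p.meet q, Set.ext fun _ => (Pattern.matches_meet_iff hp hq).symm⟩)
end

section
/- The directed graph P of stretching classes constructed from a positive root α is finite and acyclic. -/
open Finset

section Classes

variable {V : Type*} [Fintype V] [DecidableEq V]

/-- A stretching class: an integer-valued function on `st_m(G)` together with a
marked (asterisked) interval `[a, a+len)` of vertices on the stretched path. -/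
structure SClass (V : Type*) [DecidableEq V] (x : V) where
  m : ℕ
  base : StV V x m → ℤ
  a : ℕ
  len : ℕ

/-- Validity of a stretching class: at least one asterisk, the marked interval lies
on the stretched path, and no two adjacent asterisked values are equal. -/
def SClass.Valid {x : V} (c : SClass V x) : Prop :=
  1 ≤ c.len ∧ c.a + c.len ≤ c.m + 1 ∧
  ∀ i : ℕ, c.a ≤ i → i + 1 < c.a + c.len →
    ∀ (h1 : i < c.m + 1) (h2 : i + 1 < c.m + 1),
      c.base (Sum.inr ⟨i, h1⟩) ≠ c.base (Sum.inr ⟨i + 1, h2⟩)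

/-- The list of values of a function on the stretched path `x_0, …, x_n`. -/
def pathList {x : V} {n : ℕ} (β : StV V x n → ℤ) : List ℤ :=
  (List.finRange (n + 1)).map fun i => β (Sum.inr i)

/-- Membership of a function on `st_n(G)` in a stretching class: it agrees with the
class off the stretched path and before/after the marked interval, and assumes the
asterisked values in order, each repeated a positive number of times. -/
def MemClass {x : V} (c : SClass V x) (n : ℕ) (β : StV V x n → ℤ) : Prop :=
  (∀ y : {y : V // y ≠ x}, β (Sum.inl y) = c.base (Sum.inl y)) ∧
  ∃ counts : List ℕ, counts.length = c.len ∧ (∀ k ∈ counts, 0 < k) ∧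
    pathList β = (pathList c.base).take c.a ++
      ((((pathList c.base).drop c.a).take c.len).zip counts).flatMap
        (fun vk => List.replicate vk.2 vk.1) ++
      (pathList c.base).drop (c.a + c.len)

/-- Value of a class on the stretched path, by natural-number index. -/
def pv {x : V} (c : SClass V x) (i : ℕ) : ℤ :=
  if h : i < c.m + 1 then c.base (Sum.inr ⟨i, h⟩) else 0

/-- Value of a class at a vertex off the stretched path. -/
def offv {x : V} (c : SClass V x) (y : V) : ℤ :=
  if h : y = x then 0 else c.base (Sum.inl ⟨y, h⟩)

/-- The weighted left sum of a stretching class. -/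
def wLeft (A : V → V → ℤ) {x : V} (L : Finset V) (c : SClass V x) : ℤ :=
  if c.a = 0 then ∑ y ∈ L, (-(A x y)) * offv c y else pv c (c.a - 1)

/-- The weighted right sum of a stretching class. -/
def wRight (A : V → V → ℤ) {x : V} (R : Finset V) (c : SClass V x) : ℤ :=
  if c.a + c.len - 1 = c.m then ∑ y ∈ R, (-(A x y)) * offv c y
  else pv c (c.a + c.len)

/-- Reflecting a stretching class at a vertex (ignoring asterisks). -/
def reflC (A : V → V → ℤ) (x : V) (L R : Finset V) (c : SClass V x)
    (v : StV V x c.m) : SClass V x :=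
  ⟨c.m, sRef (stA A x L R c.m) v c.base, c.a, c.len⟩

/-- Insert the value `s` at position `p` of the stretched path (lengthening the
path by one and extending the marked interval by one). -/
def insAt {x : V} (c : SClass V x) (p : ℕ) (s : ℤ) : SClass V x where
  m := c.m + 1
  base := fun v =>
    match v with
    | Sum.inl y => c.base (Sum.inl y)
    | Sum.inr j =>
        if (j : ℕ) < p then c.base (Sum.inr ⟨min (j : ℕ) c.m, by omega⟩)
        else if (j : ℕ) = p then s
        else c.base (Sum.inr ⟨min ((j : ℕ) - 1) c.m, by omega⟩)
  a := c.a
  len := c.len + 1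

/-- A vertex of a stretching class is marked (asterisked). -/
def Marked {x : V} (c : SClass V x) (v : StV V x c.m) : Prop :=
  ∃ i : Fin (c.m + 1), v = Sum.inr i ∧ c.a ≤ (i : ℕ) ∧ (i : ℕ) < c.a + c.len

/-- All coefficients of a stretching class are nonnegative. -/
def NonnegC {x : V} (c : SClass V x) : Prop := ∀ v, 0 ≤ c.base v

/-- The arrow relation of the graph `P` of stretching classes: one of the four
operations (reflection at a non-asterisked vertex decreasing the coefficient,
reflection at an internal asterisked vertex decreasing the coefficient, insertion of
the weighted left/right sum as new endpoint when smaller than the endpoint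
coefficient, reflection at an endpoint decreasing the coefficient with possible
removal of its asterisk), with operations producing negative coefficients
disallowed. -/
def Step (A : V → V → ℤ) (x : V) (L R : Finset V) (c c' : SClass V x) : Prop :=
  c.Valid ∧ c'.Valid ∧ NonnegC c' ∧
  ( (∃ v, ¬ Marked c v ∧ sRef (stA A x L R c.m) v c.base v < c.base v ∧
      c' = reflC A x L R c v)
  ∨ (∃ i : Fin (c.m + 1), c.a < (i : ℕ) ∧ (i : ℕ) + 1 < c.a + c.len ∧
      sRef (stA A x L R c.m) (Sum.inr i) c.base (Sum.inr i) < c.base (Sum.inr i) ∧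
      c' = reflC A x L R c (Sum.inr i))
  ∨ (wLeft A L c < pv c c.a ∧ c' = insAt c c.a (wLeft A L c))
  ∨ (wRight A R c < pv c (c.a + c.len - 1) ∧
      c' = insAt c (c.a + c.len) (wRight A R c))
  ∨ (∃ i : Fin (c.m + 1), (i : ℕ) = c.a ∧ 2 ≤ c.len ∧
      sRef (stA A x L R c.m) (Sum.inr i) c.base (Sum.inr i) < c.base (Sum.inr i) ∧
      (let d := reflC A x L R c (Sum.inr i)
       c' = if pv d (c.a + 1) ≤ pv d c.a then { d with a := c.a + 1, len := c.len - 1 }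
            else d))
  ∨ (∃ i : Fin (c.m + 1), (i : ℕ) = c.a + c.len - 1 ∧ 2 ≤ c.len ∧
      sRef (stA A x L R c.m) (Sum.inr i) c.base (Sum.inr i) < c.base (Sum.inr i) ∧
      (let d := reflC A x L R c (Sum.inr i)
       c' = if pv d (c.a + c.len - 2) ≤ pv d (c.a + c.len - 1) then
              { d with len := c.len - 1 }
            else d)) )

/-- The stretching class `α*` consisting of the stretches of `α`. -/
def alphaStar (x : V) (α : V → ℤ) : SClass V x := ⟨0, stRoot x 0 α, 0, 1⟩

/-- The vertex set of the graph `P` constructed from `α`: all stretching classes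
reachable from `α*`. -/
def Reach (A : V → V → ℤ) (x : V) (L R : Finset V) (α : V → ℤ) :
    Set (SClass V x) :=
  {c | Relation.ReflTransGen (Step A x L R) (alphaStar x α) c}

end Classes

/-!
Every arrow of `P` strictly decreases, lexicographically, the triple (weighted left sum +
weighted right sum, sum of the two endpoint coefficients, sum of all coefficients). On classes
with nonnegative coefficients these are nonnegative integers, since the weights `-A x y` of the
neighbours `y` of `x` are nonnegative. A reflection that lowers one coefficient lowers the class
pointwise, so it does not increase the first two entries and lowers the third; inserting a
smaller endpoint value keeps the weighted sums and lowers the endpoint sum; removing the asterisk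
from an endpoint replaces a weighted sum by the reflected coefficient, which the reflection
formula `(s_i β)_i = (left neighbours) + (right neighbours) - β_i` shows to be smaller.
Hence `P` has no cycles, and since each class has finitely many successors, only finitely many
classes are reachable from `α*`.
-/

theorem Relation.finite_setOf_reflTransGen {α : Type*} {r : α → α → Prop}
    (hwf : WellFounded (Function.swap r)) (hfin : ∀ a, {b | r a b}.Finite) (a : α) :
    {b | ReflTransGen r a b}.Finite := by
  induction a using hwf.induction with
  | _ a ih =>
    have hsub : {b | ReflTransGen r a b}
        ⊆ {a} ∪ ⋃ a' ∈ {a' | r a a'}, {b | ReflTransGen r a' b} := by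
      intro b hb
      rcases ReflTransGen.cases_head hb with rfl | ⟨a', ha', ha'b⟩
      · exact Or.inl rfl
      · exact Or.inr (Set.mem_biUnion ha' ha'b)
    exact ((Set.finite_singleton a).union ((hfin a).biUnion fun a' ha' => ih a' ha')).subset hsub

section ClassValues

variable {V : Type*} [DecidableEq V] {x : V}

lemma pv_of_lt (c : SClass V x) {i : ℕ} (hi : i < c.m + 1) : pv c i = c.base (Sum.inr ⟨i, hi⟩) :=
  dif_pos hi

lemma pv_of_le (c : SClass V x) {i : ℕ} (hi : c.m + 1 ≤ i) : pv c i = 0 :=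
  dif_neg (by omega)

lemma pv_nonneg {c : SClass V x} (hc : NonnegC c) (i : ℕ) : 0 ≤ pv c i := by
  unfold pv; split
  · exact hc _
  · exact le_rfl

lemma offv_nonneg {c : SClass V x} (hc : NonnegC c) (y : V) : 0 ≤ offv c y := by
  unfold offv; split
  · exact le_rfl
  · exact hc _

lemma pv_mk_base (c : SClass V x) (a l : ℕ) : pv ⟨c.m, c.base, a, l⟩ = pv c := rfl

lemma offv_mk_base (c : SClass V x) (a l : ℕ) : offv ⟨c.m, c.base, a, l⟩ = offv c := rfl

lemma insAt_m (c : SClass V x) (p : ℕ) (s : ℤ) : (insAt c p s).m = c.m + 1 := rfl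

lemma insAt_a (c : SClass V x) (p : ℕ) (s : ℤ) : (insAt c p s).a = c.a := rfl

lemma insAt_len (c : SClass V x) (p : ℕ) (s : ℤ) : (insAt c p s).len = c.len + 1 := rfl

lemma offv_insAt (c : SClass V x) (p : ℕ) (s : ℤ) : offv (insAt c p s) = offv c := rfl

lemma pv_insAt (c : SClass V x) {p : ℕ} (s : ℤ) (hp : p ≤ c.m + 1) (j : ℕ) :
    pv (insAt c p s) j = if j < p then pv c j else if j = p then s else pv c (j - 1) := by
  unfold pv insAt
  dsimp only
  split_ifs <;> first | rfl | omega | (congr; omega)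

lemma sum_ite_val_eq_pv (c : SClass V x) (k : ℕ) :
    ∑ j : Fin (c.m + 1), (if (j : ℕ) = k then c.base (Sum.inr j) else 0) = pv c k := by
  by_cases hk : k < c.m + 1
  · rw [Finset.sum_eq_single ⟨k, hk⟩ (fun j _ hj => if_neg fun h => hj (Fin.ext h))
      (by simp), if_pos rfl, pv_of_lt c hk]
  · rw [Finset.sum_eq_zero fun j _ => if_neg (by omega), pv_of_le c (by omega)]

end ClassValues

section PathReflection

variable {V : Type*} [DecidableEq V] (A : V → V → ℤ) {x : V} (L R : Finset V)

-- The contributions of the left and right neighbours of the path vertex `x_i` of `st_m(G)` to the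
-- reflection at `x_i`; the weighted sums `wLeft`, `wRight` are their values at the two ends of the
-- marked interval.
def leftNbr (c : SClass V x) (i : ℕ) : ℤ :=
  if i = 0 then ∑ y ∈ L, -A x y * offv c y else pv c (i - 1)

def rightNbr (c : SClass V x) (i : ℕ) : ℤ :=
  if i = c.m then ∑ y ∈ R, -A x y * offv c y else pv c (i + 1)

variable {A L R}

-- `pv` vanishes off the path, so the last term is right also at `i = c.m`.
lemma sum_stA_inr_inr (c : SClass V x) (i : Fin (c.m + 1)) :
    ∑ j, stA A x L R c.m (Sum.inr i) (Sum.inr j) * c.base (Sum.inr j)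
      = 2 * pv c i - (if (i : ℕ) = 0 then 0 else pv c (i - 1)) - pv c (i + 1) := by
  have hterm : ∀ j : Fin (c.m + 1), stA A x L R c.m (Sum.inr i) (Sum.inr j) * c.base (Sum.inr j)
      = 2 * (if (j : ℕ) = i then c.base (Sum.inr j) else 0)
        - (if (i : ℕ) ≠ 0 ∧ (j : ℕ) = i - 1 then c.base (Sum.inr j) else 0)
        - (if (j : ℕ) = i + 1 then c.base (Sum.inr j) else 0) := by
    intro j
    simp only [stA, Fin.ext_iff]
    split_ifs <;> omega
  simp only [hterm, Finset.sum_sub_distrib, ← Finset.mul_sum, sum_ite_val_eq_pv,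
    pv_of_lt c i.isLt]
  split_ifs with hi
  · simp [hi]
  · simp [hi, sum_ite_val_eq_pv]

variable [Fintype V]

lemma sum_stA_inr_inl (hLR : Disjoint L R) (c : SClass V x) (i : Fin (c.m + 1)) :
    ∑ y : {y : V // y ≠ x}, stA A x L R c.m (Sum.inr i) (Sum.inl y) * c.base (Sum.inl y)
      = (if (i : ℕ) = 0 then ∑ y ∈ L, A x y * offv c y else 0)
        + (if (i : ℕ) = c.m then ∑ y ∈ R, A x y * offv c y else 0) := by
  set f : V → ℤ := fun y =>
    (if ((i : ℕ) = 0 ∧ y ∈ L) ∨ ((i : ℕ) = c.m ∧ y ∈ R) then A x y else 0) * offv c y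
  have hsub : ∀ y : {y : V // y ≠ x},
      stA A x L R c.m (Sum.inr i) (Sum.inl y) * c.base (Sum.inl y) = f y := by
    rintro ⟨y, hy⟩
    simp only [stA, f, offv, dif_neg hy, Fin.ext_iff, Fin.val_zero, Fin.val_last]
  have hx : f x = 0 := by simp [f, offv]
  have hsplit : ∀ y, f y = (if (i : ℕ) = 0 then (if y ∈ L then A x y * offv c y else 0) else 0)
      + (if (i : ℕ) = c.m then (if y ∈ R then A x y * offv c y else 0) else 0) := by
    intro y
    have : y ∈ L → y ∉ R := fun h => Finset.disjoint_left.mp hLR h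
    simp only [f]
    split_ifs <;> first | (exfalso; tauto) | simp
  rw [Finset.sum_congr rfl fun y _ => hsub y,
    ← Finset.sum_subtype (Finset.univ.erase x) (by simp) f, Finset.sum_erase _ hx]
  simp only [hsplit, Finset.sum_add_distrib]
  split_ifs <;> simp [Finset.sum_ite_mem]

lemma sRef_stA_inr (hLR : Disjoint L R) (c : SClass V x) (i : Fin (c.m + 1)) :
    sRef (stA A x L R c.m) (Sum.inr i) c.base (Sum.inr i)
      = leftNbr A L c i + rightNbr A R c i - pv c i := by
  have hneg : ∀ S : Finset V, ∑ y ∈ S, -A x y * offv c y = -∑ y ∈ S, A x y * offv c y := by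
    intro S; simp [neg_mul]
  simp only [sRef, ↓reduceIte, Fintype.sum_sum_type, sum_stA_inr_inl hLR, sum_stA_inr_inr,
    leftNbr, rightNbr, hneg, ← pv_of_lt c i.isLt]
  have hlast : (i : ℕ) = c.m → pv c (i + 1) = 0 := fun h => pv_of_le c (by omega)
  split_ifs <;> first | linarith | linarith [hlast ‹_›]

lemma reflC_m (c : SClass V x) (v : StV V x c.m) : (reflC A x L R c v).m = c.m := rfl

lemma reflC_a (c : SClass V x) (v : StV V x c.m) : (reflC A x L R c v).a = c.a := rfl

lemma sRef_le_of_lt {W : Type*} [Fintype W] [DecidableEq W] {B : W → W → ℤ} {v : W}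
    {β : W → ℤ} (hlt : sRef B v β v < β v) (w : W) : sRef B v β w ≤ β w := by
  by_cases h : w = v
  · subst h; exact hlt.le
  · simp [sRef, h]

lemma pv_reflC_of_ne (c : SClass V x) (i : Fin (c.m + 1)) {j : ℕ} (hj : j ≠ i) :
    pv (reflC A x L R c (Sum.inr i)) j = pv c j := by
  unfold pv reflC
  split_ifs with h
  · simp only [sRef, Sum.inr.injEq, Fin.ext_iff]
    exact if_neg hj
  · rfl

lemma pv_reflC_self (c : SClass V x) (i : Fin (c.m + 1)) :
    pv (reflC A x L R c (Sum.inr i)) i = sRef (stA A x L R c.m) (Sum.inr i) c.base (Sum.inr i) :=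
  dif_pos i.isLt

lemma offv_reflC (c : SClass V x) (i : Fin (c.m + 1)) :
    offv (reflC A x L R c (Sum.inr i)) = offv c := by
  funext y
  unfold offv reflC
  split_ifs
  · rfl
  · simp [sRef]

end PathReflection

section Measure

variable {V : Type*} [DecidableEq V] (A : V → V → ℤ) {x : V} (L R : Finset V)

def weightedSum (c : SClass V x) : ℤ := wLeft A L c + wRight A R c

def endpointSum (c : SClass V x) : ℤ := pv c c.a + pv c (c.a + c.len - 1)

def SClass.withBase (c : SClass V x) (β : StV V x c.m → ℤ) : SClass V x := ⟨c.m, β, c.a, c.len⟩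

variable {A L R}

lemma toLex_toNat_lt_toLex_toNat {w w' e e' s s' : ℤ} (hw' : 0 ≤ w') (he' : 0 ≤ e')
    (hs' : 0 ≤ s') (hw : w' ≤ w) (he : w' = w → e' ≤ e) (hs : w' = w → e' = e → s' < s) :
    (toLex (w'.toNat, toLex (e'.toNat, s'.toNat)) : ℕ ×ₗ ℕ ×ₗ ℕ)
      < toLex (w.toNat, toLex (e.toNat, s.toNat)) := by
  simp only [Prod.Lex.toLex_lt_toLex]
  rcases hw.lt_or_eq with hw | rfl
  · left; omega
  · right
    refine ⟨rfl, ?_⟩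
    rcases (he rfl).lt_or_eq with he | rfl
    · left; omega
    · right; exact ⟨rfl, by have := hs rfl rfl; omega⟩

lemma weightedSum_nonneg (hw : ∀ y ∈ L ∪ R, 0 ≤ -A x y) {c : SClass V x} (hc : NonnegC c) :
    0 ≤ weightedSum A L R c := by
  have hsum : ∀ S ⊆ L ∪ R, 0 ≤ ∑ y ∈ S, -A x y * offv c y := fun S hS =>
    Finset.sum_nonneg fun y hy => mul_nonneg (hw y (hS hy)) (offv_nonneg hc y)
  unfold weightedSum wLeft wRight
  apply add_nonneg
  · split
    · exact hsum L Finset.subset_union_left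
    · exact pv_nonneg hc _
  · split
    · exact hsum R Finset.subset_union_right
    · exact pv_nonneg hc _

lemma weightedSum_insAt (c : SClass V x) {p : ℕ} (s : ℤ) (hlen : 1 ≤ c.len)
    (hb : c.a + c.len ≤ c.m + 1) (hp₁ : c.a ≤ p) (hp₂ : p ≤ c.a + c.len) :
    weightedSum A L R (insAt c p s) = weightedSum A L R c := by
  unfold weightedSum wLeft wRight
  simp only [insAt_m, insAt_a, insAt_len, offv_insAt, pv_insAt c s (show p ≤ c.m + 1 by omega)]
  congr 1 <;> split_ifs <;> first | rfl | omega

lemma endpointSum_insAt_left (c : SClass V x) (s : ℤ) (hlen : 1 ≤ c.len)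
    (hb : c.a + c.len ≤ c.m + 1) :
    endpointSum (insAt c c.a s) = s + pv c (c.a + c.len - 1) := by
  unfold endpointSum
  simp only [insAt_a, insAt_len, pv_insAt c s (show c.a ≤ c.m + 1 by omega)]
  split_ifs <;> first | omega | rfl

lemma endpointSum_insAt_right (c : SClass V x) (s : ℤ) (hlen : 1 ≤ c.len)
    (hb : c.a + c.len ≤ c.m + 1) :
    endpointSum (insAt c (c.a + c.len) s) = pv c c.a + s := by
  unfold endpointSum
  simp only [insAt_a, insAt_len, pv_insAt c s hb]
  split_ifs <;> first | rfl | omega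

variable [Fintype V]

def coeffSum (c : SClass V x) : ℤ := ∑ v, c.base v

-- `toNat` is faithful on classes with nonnegative coefficients, the only ones `Step` produces.
variable (A L R) in
def lexMeasure (c : SClass V x) : ℕ ×ₗ ℕ ×ₗ ℕ :=
  toLex ((weightedSum A L R c).toNat, toLex ((endpointSum c).toNat, (coeffSum c).toNat))

lemma lexMeasure_lt (hw : ∀ y ∈ L ∪ R, 0 ≤ -A x y) {c c' : SClass V x} (hc' : NonnegC c')
    (hW : weightedSum A L R c' ≤ weightedSum A L R c)
    (hEnd : weightedSum A L R c' = weightedSum A L R c → endpointSum c' ≤ endpointSum c)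
    (hS : weightedSum A L R c' = weightedSum A L R c → endpointSum c' = endpointSum c →
      coeffSum c' < coeffSum c) :
    lexMeasure A L R c' < lexMeasure A L R c :=
  toLex_toNat_lt_toLex_toNat (weightedSum_nonneg hw hc')
    (add_nonneg (pv_nonneg hc' _) (pv_nonneg hc' _)) (Finset.sum_nonneg fun v _ => hc' v) hW hEnd hS

lemma lexMeasure_lt_of_weightedSum_lt (hw : ∀ y ∈ L ∪ R, 0 ≤ -A x y) {c c' : SClass V x}
    (hnn : NonnegC c') (hW : weightedSum A L R c' < weightedSum A L R c) :
    lexMeasure A L R c' < lexMeasure A L R c :=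
  lexMeasure_lt hw hnn hW.le (fun h => absurd h hW.ne) (fun h => absurd h hW.ne)

lemma lexMeasure_withBase_lt (hw : ∀ y ∈ L ∪ R, 0 ≤ -A x y) {c : SClass V x}
    {β : StV V x c.m → ℤ} (hle : ∀ v, β v ≤ c.base v) {v₀ : StV V x c.m} (hlt : β v₀ < c.base v₀)
    (hnn : NonnegC (c.withBase β)) :
    lexMeasure A L R (c.withBase β) < lexMeasure A L R c := by
  have hpv : ∀ i, pv (c.withBase β) i ≤ pv c i := fun i => by
    unfold pv SClass.withBase
    split_ifs
    exacts [hle _, le_rfl]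
  have hoff : ∀ S ⊆ L ∪ R, ∑ y ∈ S, -A x y * offv (c.withBase β) y
      ≤ ∑ y ∈ S, -A x y * offv c y := fun S hS =>
    Finset.sum_le_sum fun y hy => mul_le_mul_of_nonneg_left
      (by unfold offv; split; exacts [le_rfl, hle _]) (hw y (hS hy))
  refine lexMeasure_lt hw hnn ?_ (fun _ => add_le_add (hpv _) (hpv _))
    (fun _ _ => Finset.sum_lt_sum (fun v _ => hle v) ⟨v₀, Finset.mem_univ _, hlt⟩)
  unfold weightedSum wLeft wRight SClass.withBase
  apply add_le_add
  · split_ifs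
    exacts [hoff L Finset.subset_union_left, hpv _]
  · split_ifs
    exacts [hoff R Finset.subset_union_right, hpv _]

lemma lexMeasure_insAt_lt (hw : ∀ y ∈ L ∪ R, 0 ≤ -A x y) (c : SClass V x) {p : ℕ} {s : ℤ}
    (hlen : 1 ≤ c.len) (hb : c.a + c.len ≤ c.m + 1) (hp₁ : c.a ≤ p) (hp₂ : p ≤ c.a + c.len)
    (hend : endpointSum (insAt c p s) < endpointSum c) (hnn : NonnegC (insAt c p s)) :
    lexMeasure A L R (insAt c p s) < lexMeasure A L R c := by
  have hW := weightedSum_insAt (A := A) (L := L) (R := R) c s hlen hb hp₁ hp₂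
  exact lexMeasure_lt hw hnn hW.le (fun _ => hend.le) (fun _ h => absurd h hend.ne)

end Measure

section Step

variable {V : Type*} [Fintype V] [DecidableEq V] {A : V → V → ℤ} {x : V} {L R : Finset V}

lemma lexMeasure_unmarkLeft_lt (hw : ∀ y ∈ L ∪ R, 0 ≤ -A x y) (hLR : Disjoint L R)
    (c : SClass V x) (hlen : 2 ≤ c.len) (hb : c.a + c.len ≤ c.m + 1)
    (i : Fin (c.m + 1)) (hi : (i : ℕ) = c.a)
    (hdec : sRef (stA A x L R c.m) (Sum.inr i) c.base (Sum.inr i) < c.base (Sum.inr i))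
    (hcond : pv (reflC A x L R c (Sum.inr i)) (c.a + 1) ≤ pv (reflC A x L R c (Sum.inr i)) c.a)
    (hnn : NonnegC { reflC A x L R c (Sum.inr i) with a := c.a + 1, len := c.len - 1 }) :
    lexMeasure A L R { reflC A x L R c (Sum.inr i) with a := c.a + 1, len := c.len - 1 }
      < lexMeasure A L R c := by
  have hold : c.base (Sum.inr i) = pv c c.a := by rw [← hi, pv_of_lt c i.isLt]
  have hr : sRef (stA A x L R c.m) (Sum.inr i) c.base (Sum.inr i)
      = wLeft A L c + pv c (c.a + 1) - pv c c.a := by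
    rw [sRef_stA_inr hLR c i, hi]
    simp only [leftNbr, rightNbr, wLeft, if_neg (show c.a ≠ c.m by omega)]
  have hnew : pv (reflC A x L R c (Sum.inr i)) c.a
      = sRef (stA A x L R c.m) (Sum.inr i) c.base (Sum.inr i) := hi ▸ pv_reflC_self c i
  have hnext : pv (reflC A x L R c (Sum.inr i)) (c.a + 1) = pv c (c.a + 1) :=
    pv_reflC_of_ne c i (by omega)
  have hW : weightedSum A L R
      { reflC A x L R c (Sum.inr i) with a := c.a + 1, len := c.len - 1 }
      = pv (reflC A x L R c (Sum.inr i)) c.a + wRight A R c := by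
    unfold weightedSum wLeft wRight
    simp only [pv_mk_base, offv_mk_base]
    simp only [offv_reflC, reflC_m, Nat.add_sub_cancel, if_neg (Nat.succ_ne_zero c.a),
      show c.a + 1 + (c.len - 1) = c.a + c.len by omega]
    congr 1
    split_ifs <;> first | rfl | exact pv_reflC_of_ne c i (by omega)
  apply lexMeasure_lt_of_weightedSum_lt hw hnn
  rw [hW, weightedSum]
  linarith

lemma lexMeasure_unmarkRight_lt (hw : ∀ y ∈ L ∪ R, 0 ≤ -A x y) (hLR : Disjoint L R)
    (c : SClass V x) (hlen : 2 ≤ c.len) (hb : c.a + c.len ≤ c.m + 1)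
    (i : Fin (c.m + 1)) (hi : (i : ℕ) = c.a + c.len - 1)
    (hdec : sRef (stA A x L R c.m) (Sum.inr i) c.base (Sum.inr i) < c.base (Sum.inr i))
    (hcond : pv (reflC A x L R c (Sum.inr i)) (c.a + c.len - 2)
      ≤ pv (reflC A x L R c (Sum.inr i)) (c.a + c.len - 1))
    (hnn : NonnegC { reflC A x L R c (Sum.inr i) with len := c.len - 1 }) :
    lexMeasure A L R { reflC A x L R c (Sum.inr i) with len := c.len - 1 }
      < lexMeasure A L R c := by
  have hold : c.base (Sum.inr i) = pv c (c.a + c.len - 1) := by rw [← hi, pv_of_lt c i.isLt]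
  have hr : sRef (stA A x L R c.m) (Sum.inr i) c.base (Sum.inr i)
      = pv c (c.a + c.len - 2) + wRight A R c - pv c (c.a + c.len - 1) := by
    rw [sRef_stA_inr hLR c i, hi]
    simp only [leftNbr, rightNbr, wRight, if_neg (show c.a + c.len - 1 ≠ 0 by omega),
      show c.a + c.len - 1 - 1 = c.a + c.len - 2 by omega,
      show c.a + c.len - 1 + 1 = c.a + c.len by omega]
  have hnew : pv (reflC A x L R c (Sum.inr i)) (c.a + c.len - 1)
      = sRef (stA A x L R c.m) (Sum.inr i) c.base (Sum.inr i) := hi ▸ pv_reflC_self c i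
  have hprev : pv (reflC A x L R c (Sum.inr i)) (c.a + c.len - 2) = pv c (c.a + c.len - 2) :=
    pv_reflC_of_ne c i (by omega)
  have hW : weightedSum A L R { reflC A x L R c (Sum.inr i) with len := c.len - 1 }
      = wLeft A L c + pv (reflC A x L R c (Sum.inr i)) (c.a + c.len - 1) := by
    unfold weightedSum wLeft wRight
    simp only [pv_mk_base, offv_mk_base]
    simp only [offv_reflC, reflC_m, reflC_a, show c.a + (c.len - 1) = c.a + c.len - 1 by omega,
      if_neg (show c.a + c.len - 1 - 1 ≠ c.m by omega)]
    congr 1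
    split_ifs <;> first | rfl | exact pv_reflC_of_ne c i (by omega)
  apply lexMeasure_lt_of_weightedSum_lt hw hnn
  rw [hW, weightedSum]
  linarith

lemma lexMeasure_lt_of_step (hw : ∀ y ∈ L ∪ R, 0 ≤ -A x y) (hLR : Disjoint L R)
    {c c' : SClass V x} (h : Step A x L R c c') : lexMeasure A L R c' < lexMeasure A L R c := by
  obtain ⟨⟨hlen, hb, -⟩, -, hnn, hop⟩ := h
  rcases hop with ⟨v, -, hdec, rfl⟩ | ⟨i, -, -, hdec, rfl⟩ | ⟨hlt, rfl⟩ | ⟨hlt, rfl⟩ |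
    ⟨i, hi, hlen₂, hdec, hc'⟩ | ⟨i, hi, hlen₂, hdec, hc'⟩
  · exact lexMeasure_withBase_lt hw (sRef_le_of_lt hdec) hdec hnn
  · exact lexMeasure_withBase_lt hw (sRef_le_of_lt hdec) hdec hnn
  · refine lexMeasure_insAt_lt hw c hlen hb le_rfl (by omega) ?_ hnn
    rw [endpointSum_insAt_left c _ hlen hb, endpointSum]
    omega
  · refine lexMeasure_insAt_lt hw c hlen hb (by omega) le_rfl ?_ hnn
    rw [endpointSum_insAt_right c _ hlen hb, endpointSum]
    omega
  · dsimp only at hc'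
    split_ifs at hc' with hcond <;> subst hc'
    · exact lexMeasure_unmarkLeft_lt hw hLR c hlen₂ hb i hi hdec hcond hnn
    · exact lexMeasure_withBase_lt hw (sRef_le_of_lt hdec) hdec hnn
  · dsimp only at hc'
    split_ifs at hc' with hcond <;> subst hc'
    · exact lexMeasure_unmarkRight_lt hw hLR c hlen₂ hb i hi hdec hcond hnn
    · exact lexMeasure_withBase_lt hw (sRef_le_of_lt hdec) hdec hnn

lemma wellFounded_swap_step (hw : ∀ y ∈ L ∪ R, 0 ≤ -A x y) (hLR : Disjoint L R) :
    WellFounded (Function.swap (Step A x L R)) :=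
  Subrelation.wf (lexMeasure_lt_of_step hw hLR) (InvImage.wf (lexMeasure A L R) wellFounded_lt)

variable (A x L R) in
def stepCandidates (c : SClass V x) : Set (SClass V x) :=
  {insAt c c.a (wLeft A L c), insAt c (c.a + c.len) (wRight A R c)} ∪
    ⋃ v, {reflC A x L R c v, { reflC A x L R c v with a := c.a + 1, len := c.len - 1 },
      { reflC A x L R c v with len := c.len - 1 }}

lemma mem_stepCandidates_of_step {c c' : SClass V x} (h : Step A x L R c c') :
    c' ∈ stepCandidates A x L R c := by
  obtain ⟨-, -, -, hop⟩ := h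
  rcases hop with ⟨v, -, -, rfl⟩ | ⟨i, -, -, -, rfl⟩ | ⟨-, rfl⟩ | ⟨-, rfl⟩ |
    ⟨i, -, -, -, hc'⟩ | ⟨i, -, -, -, hc'⟩
  · exact Or.inr (Set.mem_iUnion.mpr ⟨v, by simp⟩)
  · exact Or.inr (Set.mem_iUnion.mpr ⟨Sum.inr i, by simp⟩)
  · exact Or.inl (by simp)
  · exact Or.inl (by simp)
  · dsimp only at hc'
    refine Or.inr (Set.mem_iUnion.mpr ⟨Sum.inr i, ?_⟩)
    split_ifs at hc' <;> simp [hc']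
  · dsimp only at hc'
    refine Or.inr (Set.mem_iUnion.mpr ⟨Sum.inr i, ?_⟩)
    split_ifs at hc' <;> simp [hc']

lemma finite_setOf_step (c : SClass V x) : {c' | Step A x L R c c'}.Finite :=
  ((Set.toFinite _).union (Set.finite_iUnion fun _ => Set.toFinite _)).subset
    fun _ => mem_stepCandidates_of_step

end Step

lemma IsElastic.neg_nonneg_of_mem {V : Type*} [DecidableEq V] {A : V → V → ℤ} {x : V}
    {L R : Finset V} (hA : IsCartan A) (hE : IsElastic A x L R) :
    ∀ y ∈ L ∪ R, 0 ≤ -A x y := fun y hy => by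
  have hxy := (hE.union y).1 hy
  have := hA.offdiag x y (Ne.symm hxy.1)
  omega

theorem P_finite_acyclic_general {V : Type*} [Fintype V] [DecidableEq V]
    (A : V → V → ℤ) (hA : IsCartan A) (x : V) (L R : Finset V)
    (hE : IsElastic A x L R) (α : V → ℤ) :
    (Reach A x L R α).Finite ∧
    ∀ c ∈ Reach A x L R α, ¬ Relation.TransGen (Step A x L R) c c := by
  have hwf := wellFounded_swap_step (hE.neg_nonneg_of_mem hA) hE.disj
  exact ⟨Relation.finite_setOf_reflTransGen hwf finite_setOf_step _,
    fun c _ hc => hwf.transGen.irrefl.irrefl c (Relation.transGen_swap.mpr hc)⟩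

/-- the graph `P` of stretching classes constructed from a positive
root `α` is finite and acyclic. -/
theorem P_finite_acyclic {V : Type*} [Fintype V] [DecidableEq V]
    (A : V → V → ℤ) (hA : IsCartan A) (x : V) (L R : Finset V)
    (hE : IsElastic A x L R) (α : V → ℤ) (hα : IsPosRoot A α) :
    (Reach A x L R α).Finite ∧
    ∀ c ∈ Reach A x L R α, ¬ Relation.TransGen (Step A x L R) c c :=
  P_finite_acyclic_general A hA x L R hE α
end

section
/- Let β, β' be positive roots with β = s_i(β') and β - β' a positive multiple of α_i. Then the fractures of β^⊥ consist of α_i^⊥ ∩ β^⊥ together with all subspaces s_i(F') as F' ranges over the fractures of (β')^⊥. -/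
/-!
If `αᵢ` does not lie in the span of `γ` and `β`, then `sᵢ` maps the positive roots of that rank 2
subsystem onto those of the subsystem spanned by `sᵢγ` and `sᵢβ = β'`, and the contragredient
action carries witnesses of basicness along; so `sᵢ` transports the fracture `γ^⊥ ∩ β^⊥` to a
fracture of `(β')^⊥`, and back. If `αᵢ` does lie in that span, the fracture is `αᵢ^⊥ ∩ β^⊥`, and
`αᵢ^⊥` cuts `β^⊥` because `β' = β - c αᵢ` with `c > 0` is a positive root of the subsystem.

That `sᵢ` keeps the positive roots other than `αᵢ` positive rests on every root being nonnegative
or nonpositive, proved by Humphreys' argument: `w αₛ ≥ 0` whenever `ℓ(w sₛ) > ℓ(w)`, by induction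
on `ℓ(w)`, factoring `w` through a rank 2 parabolic subgroup. Lengths are taken in the group
generated by the reflections, with parity from the determinant, and the rank 2 case is an explicit
computation when `A s t * A t s ≥ 4` and a braid relation otherwise.
-/

open Finset

section Real

variable {V : Type*} [Fintype V] [DecidableEq V]

/-- A root viewed as a real vector. -/
def toR (α : V → ℤ) : V → ℝ := fun v => (α v : ℝ)

/-- The pairing between a covector `f ∈ V*` and a root `α`. -/
def pairing (f : V → ℝ) (α : V → ℤ) : ℝ := ∑ v, f v * α v

/-- The reflecting hyperplane `α^⊥ ⊂ V*` of a root `α`. -/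
def perp (α : V → ℤ) : Set (V → ℝ) := {f | pairing f α = 0}

/-- Two roots are parallel if they span the same line. -/
def RootParallel (γ δ : V → ℤ) : Prop := ∃ t : ℝ, toR γ = t • toR δ

/-- The set of positive roots of `A`. -/
def PosRoots (A : V → V → ℤ) : Set (V → ℤ) :=
  {γ | IsRoot A γ ∧ ∀ v, 0 ≤ γ v}

/-- `γ` is basic in the collection of positive roots `S` (of a rank 2 subsystem):
its hyperplane bounds the region of the corresponding subarrangement containing the
base region `D`, witnessed by a point of `γ^⊥` pairing positively with every
positive root of `S` not parallel to `γ`. -/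
def IsBasicIn (S : Set (V → ℤ)) (γ : V → ℤ) : Prop :=
  γ ∈ S ∧ ∃ f : V → ℝ, pairing f γ = 0 ∧
    ∀ δ ∈ S, ¬ RootParallel δ γ → 0 < pairing f δ

/-- The set of positive roots of a set of roots. -/
def posPart (S : Set (V → ℤ)) : Set (V → ℤ) := {γ ∈ S | ∀ v, 0 ≤ γ v}

/-- `S` is a rank 2 subsystem of the root system of `A`: the set of roots lying in
a 2-dimensional subspace which they span. -/
def IsRank2 (A : V → V → ℤ) (S : Set (V → ℤ)) : Prop :=
  ∃ U : Submodule ℝ (V → ℝ), Module.finrank ℝ U = 2 ∧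
    S = {γ | IsRoot A γ ∧ toR γ ∈ U} ∧
    Submodule.span ℝ (toR '' S) = U

/-- `α, β` are the fundamental roots of a rank 2 subsystem with positive part `S`:
every positive root of the subsystem is a nonnegative linear combination of them. -/
def FundPair (S : Set (V → ℤ)) (α β : V → ℤ) : Prop :=
  α ∈ S ∧ β ∈ S ∧ ∀ γ ∈ S, ∃ c d : ℝ, 0 ≤ c ∧ 0 ≤ d ∧
    toR γ = c • toR α + d • toR β

/-- The rank 2 subarrangement generated by `γ^⊥` and `δ^⊥`, described by its set of
positive roots: the positive roots in the span of `γ` and `δ`. -/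
def rank2Sub (A : V → V → ℤ) (γ δ : V → ℤ) : Set (V → ℤ) :=
  {ρ ∈ PosRoots A | toR ρ ∈ Submodule.span ℝ {toR γ, toR δ}}

/-- `γ^⊥` cuts `δ^⊥`: in the rank 2 subarrangement they generate, `γ^⊥` is basic
but `δ^⊥` is not. -/
def Cuts (A : V → V → ℤ) (γ δ : V → ℤ) : Prop :=
  IsBasicIn (rank2Sub A γ δ) γ ∧ ¬ IsBasicIn (rank2Sub A γ δ) δ

/-- `F` is a fracture of `δ^⊥`: the intersection of `δ^⊥` with a hyperplane
cutting it. -/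
def IsFracture (A : V → V → ℤ) (δ : V → ℤ) (F : Set (V → ℝ)) : Prop :=
  ∃ γ ∈ PosRoots A, Cuts A γ δ ∧ F = perp γ ∩ perp δ

/-- The contragradient action of the simple reflection `s_i` on `V*`. -/
def coRef (A : V → V → ℤ) (i : V) (f : V → ℝ) : V → ℝ :=
  fun v => f v - (A i v : ℝ) * f i

end Real

section WeylGroup

variable {V : Type*} [DecidableEq V]

lemma simpleRoot_eq_single (v : V) : simpleRoot v = Pi.single v 1 := by
  funext y
  by_cases h : y = v <;> simp [simpleRoot, h]

lemma simpleRoot_nonneg (v : V) : 0 ≤ simpleRoot v := fun y => by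
  by_cases h : y = v <;> simp [simpleRoot, h]

variable [Fintype V] (A : V → V → ℤ)

lemma sRef_eq (v : V) (α : V → ℤ) : sRef A v α = α - (A v ⬝ᵥ α) • simpleRoot v := by
  funext y
  by_cases h : y = v <;> simp [sRef, simpleRoot, h, dotProduct]

lemma sRef_apply_of_ne {v y : V} (h : y ≠ v) (α : V → ℤ) : sRef A v α y = α y := by
  simp [sRef, h]

variable {A}

lemma sRef_sRef (hA : IsCartan A) (v : V) (α : V → ℤ) : sRef A v (sRef A v α) = α := by
  simp only [sRef_eq, dotProduct_sub, dotProduct_smul, simpleRoot_eq_single, dotProduct_single,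
    hA.diag, smul_eq_mul]
  module

lemma sRef_simpleRoot_self (hA : IsCartan A) (v : V) : sRef A v (simpleRoot v) = -simpleRoot v := by
  rw [sRef_eq, simpleRoot_eq_single, dotProduct_single, hA.diag]
  module

variable (A)

def sRefₗ (v : V) : Module.End ℤ (V → ℤ) where
  toFun := sRef A v
  map_add' α β := by simp only [sRef_eq, dotProduct_add]; module
  map_smul' c α := by simp only [sRef_eq, dotProduct_smul, RingHom.id_apply]; module

lemma sRefₗ_apply (v : V) (α : V → ℤ) : sRefₗ A v α = sRef A v α := rfl

/-- The last letter of `w` acts first. -/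
def wordAct (w : List V) : Module.End ℤ (V → ℤ) := (w.map (sRefₗ A)).prod

@[simp] lemma wordAct_nil : wordAct A [] = 1 := rfl

@[simp] lemma wordAct_cons (v : V) (w : List V) :
    wordAct A (v :: w) = sRefₗ A v * wordAct A w := rfl

@[simp] lemma wordAct_append (w u : List V) : wordAct A (w ++ u) = wordAct A w * wordAct A u := by
  simp [wordAct]

lemma wordAct_singleton (v : V) : wordAct A [v] = sRefₗ A v := by simp

variable {A}

lemma sRefₗ_mul_self (hA : IsCartan A) (v : V) : sRefₗ A v * sRefₗ A v = 1 :=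
  LinearMap.ext (sRef_sRef hA v)

lemma wordAct_append_singleton_self (hA : IsCartan A) (w : List V) (v : V) :
    wordAct A (w ++ [v] ++ [v]) = wordAct A w := by
  simp [sRefₗ_mul_self hA]

lemma wordAct_reverse_mul (hA : IsCartan A) (w : List V) :
    wordAct A w.reverse * wordAct A w = 1 := by
  induction w with
  | nil => simp
  | cons v w ih =>
    rw [List.reverse_cons, wordAct_append, wordAct_singleton, wordAct_cons, mul_assoc,
      ← mul_assoc (sRefₗ A v), sRefₗ_mul_self hA, one_mul, ih]

open Matrix in
lemma det_sRefₗ (hA : IsCartan A) (v : V) : LinearMap.det (sRefₗ A v) = -1 := by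
  have : sRefₗ A v = Matrix.toLin' (1 - vecMulVec (simpleRoot v) (A v)) := by
    refine LinearMap.ext fun α => ?_
    simp [sRefₗ_apply, sRef_eq, vecMulVec_mulVec]
  rw [this, LinearMap.det_toLin', vecMulVec_eq Unit, det_one_sub_mul_comm, det_unique]
  simp [replicateRow_mul_replicateCol_apply, simpleRoot_eq_single, hA.diag]

lemma det_wordAct (hA : IsCartan A) (w : List V) :
    LinearMap.det (wordAct A w) = (-1) ^ w.length := by
  induction w with
  | nil => simp
  | cons v w ih => rw [wordAct_cons, map_mul, det_sRefₗ hA, ih, List.length_cons, pow_succ']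

variable (A)

noncomputable def reducedLength (w : List V) : ℕ :=
  sInf {n | ∃ u : List V, u.length = n ∧ wordAct A u = wordAct A w}

lemma exists_reduced_word (w : List V) :
    ∃ u : List V, u.length = reducedLength A w ∧ wordAct A u = wordAct A w :=
  Nat.sInf_mem (s := {n | ∃ u : List V, u.length = n ∧ wordAct A u = wordAct A w})
    ⟨w.length, w, rfl, rfl⟩

variable {A}

lemma reducedLength_le {u w : List V} (h : wordAct A u = wordAct A w) :
    reducedLength A w ≤ u.length :=
  Nat.sInf_le ⟨u, rfl, h⟩

lemma reducedLength_congr {u w : List V} (h : wordAct A u = wordAct A w) :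
    reducedLength A u = reducedLength A w := by
  simp only [reducedLength, h]

variable (A) in
lemma reducedLength_append_le (w u : List V) :
    reducedLength A (w ++ u) ≤ reducedLength A w + u.length := by
  obtain ⟨w₀, hlen, hw₀⟩ := exists_reduced_word A w
  simpa [hlen] using reducedLength_le (u := w₀ ++ u) (by simp [hw₀])

lemma reducedLength_eq_zero {w : List V} (h : reducedLength A w = 0) : wordAct A w = 1 := by
  obtain ⟨w₀, hlen, hw₀⟩ := exists_reduced_word A w
  rw [← hw₀, List.length_eq_zero_iff.mp (hlen.trans h), wordAct_nil]

lemma reducedLength_mod_two (hA : IsCartan A) (w : List V) :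
    reducedLength A w % 2 = w.length % 2 := by
  obtain ⟨w₀, hlen, hw₀⟩ := exists_reduced_word A w
  have hdet := congrArg LinearMap.det hw₀
  rw [det_wordAct hA, det_wordAct hA, neg_one_pow_eq_pow_mod_two,
    neg_one_pow_eq_pow_mod_two (n := w.length), hlen] at hdet
  rcases Nat.mod_two_eq_zero_or_one (reducedLength A w) with h | h <;>
    rcases Nat.mod_two_eq_zero_or_one w.length with h' | h' <;> simp_all

lemma reducedLength_append_singleton (hA : IsCartan A) (w : List V) (s : V) :
    reducedLength A (w ++ [s]) = reducedLength A w + 1 ∨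
      reducedLength A (w ++ [s]) + 1 = reducedLength A w := by
  have hup := reducedLength_append_le A w [s]
  have hdown := reducedLength_append_le A (w ++ [s]) [s]
  rw [reducedLength_congr (wordAct_append_singleton_self hA w s)] at hdown
  have h₁ := reducedLength_mod_two hA w
  have h₂ := reducedLength_mod_two hA (w ++ [s])
  simp only [List.length_append, List.length_singleton] at hup hdown h₂
  omega

end WeylGroup

section Dihedral

variable {V : Type*}

/-- The alternating word `[…, y, x, y, x]` of length `k` whose last letter is `x`. -/
def altWord (x y : V) : ℕ → List V
  | 0 => []
  | k + 1 => (if Even k then x else y) :: altWord x y k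

@[simp] lemma length_altWord (x y : V) (k : ℕ) : (altWord x y k).length = k := by
  induction k with
  | zero => rfl
  | succ k ih => simp [altWord, ih]

lemma drop_altWord (x y : V) (n j : ℕ) : (altWord x y n).drop j = altWord x y (n - j) := by
  induction n generalizing j with
  | zero => simp [altWord]
  | succ n ih =>
    cases j with
    | zero => rfl
    | succ j => simp [altWord, ih]

lemma mem_altWord {x y v : V} {k : ℕ} (h : v ∈ altWord x y k) : v = x ∨ v = y := by
  induction k with
  | zero => simp [altWord] at h
  | succ k ih =>
    simp only [altWord, List.mem_cons] at h
    rcases h with rfl | h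
    · split_ifs <;> simp
    · exact ih h

lemma reverse_altWord_succ (x y : V) (k : ℕ) :
    (altWord x y (k + 1)).reverse = (altWord x y k).reverse ++ [if Even k then x else y] := by
  simp [altWord]

/-- Coordinates of `wordAct A (altWord t s k) αₛ` in the basis `αₛ, αₜ`,
where `a = -A s t` and `b = -A t s`. -/
def dihedralCoeff (a b : ℤ) : ℕ → ℤ × ℤ
  | 0 => (1, 0)
  | k + 1 =>
    if Even k then ((dihedralCoeff a b k).1, b * (dihedralCoeff a b k).1 - (dihedralCoeff a b k).2)
    else (a * (dihedralCoeff a b k).2 - (dihedralCoeff a b k).1, (dihedralCoeff a b k).2)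

/-- The order of `sₛ sₜ` when `a b < 4`, i.e. the length of the braid relation. -/
def braidLength (a b : ℤ) : ℕ :=
  if a * b = 0 then 2 else if a * b = 1 then 3 else if a * b = 2 then 4 else 6

/-- The pairs `(-A s t, -A t s)` of the rank 2 Cartan matrices of finite type. -/
def finiteRank2 : List (ℤ × ℤ) := [(0, 0), (1, 1), (1, 2), (2, 1), (1, 3), (3, 1)]

lemma dihedralCoeff_nonneg_of_lt_braidLength {a b : ℤ} (hab : (a, b) ∈ finiteRank2) {k : ℕ}
    (hk : k < braidLength a b) : 0 ≤ (dihedralCoeff a b k).1 ∧ 0 ≤ (dihedralCoeff a b k).2 := by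
  revert k
  simp only [finiteRank2, List.mem_cons, Prod.mk.injEq, List.not_mem_nil, or_false] at hab
  rcases hab with ⟨rfl, rfl⟩ | ⟨rfl, rfl⟩ | ⟨rfl, rfl⟩ | ⟨rfl, rfl⟩ | ⟨rfl, rfl⟩ | ⟨rfl, rfl⟩ <;>
    decide

lemma dihedralCoeff_nonneg_of_four_le {a b : ℤ} (ha : 0 ≤ a) (hb : 0 ≤ b) (hab : 4 ≤ a * b)
    (k : ℕ) : 0 ≤ (dihedralCoeff a b k).1 ∧ 0 ≤ (dihedralCoeff a b k).2 := by
  suffices h : ∀ k, 0 ≤ (dihedralCoeff a b k).1 ∧ 0 ≤ (dihedralCoeff a b k).2 ∧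
      (Even k → 1 ≤ (dihedralCoeff a b k).1 ∧
        2 * (dihedralCoeff a b k).2 ≤ b * (dihedralCoeff a b k).1) ∧
      (¬ Even k → 1 ≤ (dihedralCoeff a b k).2 ∧
        2 * (dihedralCoeff a b k).1 ≤ a * (dihedralCoeff a b k).2) from
    ⟨(h k).1, (h k).2.1⟩
  intro k
  induction k with
  | zero => simp [dihedralCoeff, hb]
  | succ k ih =>
    obtain ⟨hc, hd, heven, hodd⟩ := ih
    by_cases hk : Even k
    · obtain ⟨hc1, hcd⟩ := heven hk
      simp only [dihedralCoeff, hk, ↓reduceIte, Nat.even_add_one, not_true, false_imp_iff,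
        true_and, not_false_eq_true, forall_const]
      exact ⟨hc, by nlinarith, by nlinarith, by nlinarith⟩
    · obtain ⟨hd1, hcd⟩ := hodd hk
      simp only [dihedralCoeff, hk, ↓reduceIte, Nat.even_add_one, not_false_eq_true,
        forall_const, not_true, false_imp_iff, and_true]
      exact ⟨by nlinarith, hd, by nlinarith, by nlinarith⟩

variable {A : V → V → ℤ} {s t : V}

lemma mem_finiteRank2 (hA : IsCartan A) (hst : s ≠ t) (h : -A s t * -A t s < 4) :
    (-A s t, -A t s) ∈ finiteRank2 := by
  have hst' := hA.offdiag s t hst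
  have hts' := hA.offdiag t s hst.symm
  have hz := hA.symm_zero s t
  have hz' := hA.symm_zero t s
  have ha : -3 ≤ A s t := by
    rcases hts'.lt_or_eq with hts | hts
    · nlinarith
    · simp [hz' hts]
  have hb : -3 ≤ A t s := by
    rcases hst'.lt_or_eq with hst | hst
    · nlinarith
    · simp [hz hst]
  simp only [finiteRank2, List.mem_cons, Prod.mk.injEq, List.not_mem_nil, or_false]
  interval_cases hAst : A s t <;> interval_cases hAts : A t s <;> simp_all

variable [DecidableEq V]

/-- On vectors `α + p αₛ + q αₜ`, the reflections `sₛ, sₜ` only change the coordinates `(p, q)`;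
here `a = -A s t`, `b = -A t s`, `Cs = A s ⬝ᵥ α`, `Ct = A t ⬝ᵥ α`. -/
def rank2Step (s : V) (a b Cs Ct : ℤ) (v : V) (pq : ℤ × ℤ) : ℤ × ℤ :=
  if v = s then (a * pq.2 - pq.1 - Cs, pq.2) else (pq.1, b * pq.1 - pq.2 - Ct)

lemma foldr_rank2Step_altWord (hst : s ≠ t) (a b : ℤ) (k : ℕ) :
    (altWord t s k).foldr (rank2Step s a b 0 0) (1, 0) = dihedralCoeff a b k := by
  induction k with
  | zero => rfl
  | succ k ih =>
    by_cases hk : Even k <;> simp [altWord, dihedralCoeff, rank2Step, hk, hst.symm, ih]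

lemma foldr_rank2Step_braid (hst : s ≠ t) {a b : ℤ} (hab : (a, b) ∈ finiteRank2) (Cs Ct : ℤ) :
    (altWord t s (braidLength a b)).foldr (rank2Step s a b Cs Ct) (0, 0) =
      (altWord s t (braidLength a b)).foldr (rank2Step s a b Cs Ct) (0, 0) := by
  simp only [finiteRank2, List.mem_cons, Prod.mk.injEq, List.not_mem_nil, or_false] at hab
  rcases hab with ⟨rfl, rfl⟩ | ⟨rfl, rfl⟩ | ⟨rfl, rfl⟩ | ⟨rfl, rfl⟩ | ⟨rfl, rfl⟩ | ⟨rfl, rfl⟩ <;>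
    refine Prod.ext ?_ ?_ <;>
    simp [braidLength, altWord, rank2Step, hst.symm, Nat.even_iff] <;> ring

variable [Fintype V]

lemma sRef_add_smul_add_smul (hA : IsCartan A) (α : V → ℤ) (p q : ℤ) :
    sRef A s (α + p • simpleRoot s + q • simpleRoot t) =
      α + (-A s t * q - p - A s ⬝ᵥ α) • simpleRoot s + q • simpleRoot t := by
  simp only [sRef_eq, dotProduct_add, dotProduct_smul, simpleRoot_eq_single, dotProduct_single,
    hA.diag, smul_eq_mul, mul_one]
  module

lemma wordAct_add_smul_add_smul (hA : IsCartan A) (hst : s ≠ t) {w : List V}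
    (hw : ∀ v ∈ w, v = s ∨ v = t) (α : V → ℤ) (p q : ℤ) :
    wordAct A w (α + p • simpleRoot s + q • simpleRoot t) =
      α + (w.foldr (rank2Step s (-A s t) (-A t s) (A s ⬝ᵥ α) (A t ⬝ᵥ α)) (p, q)).1 • simpleRoot s +
        (w.foldr (rank2Step s (-A s t) (-A t s) (A s ⬝ᵥ α) (A t ⬝ᵥ α)) (p, q)).2 •
          simpleRoot t := by
  induction w with
  | nil => rfl
  | cons v w ih =>
    rw [wordAct_cons, Module.End.mul_apply, ih fun u hu => hw u (List.mem_cons_of_mem v hu),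
      sRefₗ_apply, List.foldr_cons]
    rcases hw v List.mem_cons_self with rfl | rfl
    · rw [sRef_add_smul_add_smul hA]
      simp only [rank2Step, ↓reduceIte]
    · rw [add_right_comm, sRef_add_smul_add_smul hA, add_right_comm]
      simp only [rank2Step, if_neg hst.symm]

lemma wordAct_altWord_simpleRoot (hA : IsCartan A) (hst : s ≠ t) (k : ℕ) :
    wordAct A (altWord t s k) (simpleRoot s) =
      (dihedralCoeff (-A s t) (-A t s) k).1 • simpleRoot s +
        (dihedralCoeff (-A s t) (-A t s) k).2 • simpleRoot t := by
  have h := wordAct_add_smul_add_smul hA hst (w := altWord t s k)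
    (fun v hv => (mem_altWord hv).symm) 0 1 0
  simpa [dotProduct_zero, foldr_rank2Step_altWord hst] using h

lemma braid_relation (hA : IsCartan A) (hst : s ≠ t) (hab : (-A s t, -A t s) ∈ finiteRank2) :
    wordAct A (altWord t s (braidLength (-A s t) (-A t s))) =
      wordAct A (altWord s t (braidLength (-A s t) (-A t s))) := by
  refine LinearMap.ext fun α => ?_
  have h₁ := wordAct_add_smul_add_smul hA hst
    (w := altWord t s (braidLength (-A s t) (-A t s))) (fun v hv => (mem_altWord hv).symm) α 0 0
  have h₂ := wordAct_add_smul_add_smul hA hst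
    (w := altWord s t (braidLength (-A s t) (-A t s))) (fun v hv => mem_altWord hv) α 0 0
  simp only [zero_smul, add_zero] at h₁ h₂
  rw [h₁, h₂, foldr_rank2Step_braid hst hab]

lemma exists_short_of_braid {m k : ℕ} (hA : IsCartan A) (hm : 1 ≤ m) (hk : m ≤ k)
    (hbraid : wordAct A (altWord t s m) = wordAct A (altWord s t m)) :
    ∃ z : List V, z.length < k ∧ wordAct A (altWord t s k ++ [s]) = wordAct A z := by
  set P := (altWord t s k).take (k - m)
  set Q := (altWord s t m).take (m - 1)
  have hP : P ++ altWord t s m = altWord t s k := by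
    conv_lhs => rw [← Nat.sub_sub_self hk, ← drop_altWord]
    exact List.take_append_drop _ _
  have hQ : Q ++ [s] = altWord s t m := by
    conv_lhs => rw [show [s] = altWord s t 1 from rfl, ← Nat.sub_sub_self hm, ← drop_altWord]
    exact List.take_append_drop _ _
  refine ⟨P ++ Q, by simp [P, Q]; omega, ?_⟩
  calc wordAct A (altWord t s k ++ [s])
      = wordAct A P * wordAct A (altWord s t m) * wordAct A [s] := by
        rw [← hP, wordAct_append, wordAct_append, hbraid]
    _ = wordAct A (P ++ Q ++ [s] ++ [s]) := by simp only [← hQ, wordAct_append, mul_assoc]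
    _ = wordAct A (P ++ Q) := wordAct_append_singleton_self hA _ _

end Dihedral

lemma Nat.exists_first_ascent (f : ℕ → ℕ) (hf : ∀ k, f (k + 1) = f k + 1 ∨ f (k + 1) + 1 = f k) :
    ∃ k, f k + k = f 0 ∧ f k < f (k + 1) ∧ ∀ j < k, f (j + 1) < f j := by
  have hdesc : ∀ k, (∀ j < k, f (j + 1) < f j) → f k + k = f 0 := by
    intro k
    induction k with
    | zero => simp
    | succ k ih =>
      intro h
      have := h k k.lt_succ_self
      have := ih fun j hj => h j (by omega)
      have := hf k
      omega
  have hex : ∃ k, f k < f (k + 1) := by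
    by_contra! h
    have := hdesc (f 0 + 1) fun j _ => (h j).lt_of_ne (by have := hf j; omega)
    omega
  refine ⟨Nat.find hex, hdesc _ fun j hj => ?_, Nat.find_spec hex, fun j hj => ?_⟩ <;>
  · have := Nat.find_min hex hj
    have := hf j
    omega

section Positivity

variable {V : Type*} [Fintype V] [DecidableEq V] {A : V → V → ℤ} {s t : V}

lemma altWord_nonneg_or_exists_short (hA : IsCartan A) (hst : s ≠ t) (k : ℕ) :
    (∃ c d : ℤ, 0 ≤ c ∧ 0 ≤ d ∧
      wordAct A (altWord t s k) (simpleRoot s) = c • simpleRoot s + d • simpleRoot t) ∨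
    ∃ z : List V, z.length < k ∧ wordAct A (altWord t s k ++ [s]) = wordAct A z := by
  have hcoeff := wordAct_altWord_simpleRoot hA hst k
  have ha : 0 ≤ -A s t := by linarith [hA.offdiag s t hst]
  have hb : 0 ≤ -A t s := by linarith [hA.offdiag t s hst.symm]
  by_cases hab : 4 ≤ -A s t * -A t s
  · obtain ⟨hc, hd⟩ := dihedralCoeff_nonneg_of_four_le ha hb hab k
    exact Or.inl ⟨_, _, hc, hd, hcoeff⟩
  have hfin := mem_finiteRank2 hA hst (not_le.mp hab)
  rcases lt_or_ge k (braidLength (-A s t) (-A t s)) with hk | hk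
  · obtain ⟨hc, hd⟩ := dihedralCoeff_nonneg_of_lt_braidLength hfin hk
    exact Or.inl ⟨_, _, hc, hd, hcoeff⟩
  · have hm : 1 ≤ braidLength (-A s t) (-A t s) := by unfold braidLength; split_ifs <;> norm_num
    exact Or.inr (exists_short_of_braid hA hm hk (braid_relation hA hst hfin))

lemma exists_reducedLength_append_lt (hA : IsCartan A) {w : List V} (hw : 0 < reducedLength A w) :
    ∃ t, reducedLength A (w ++ [t]) < reducedLength A w := by
  obtain ⟨w₀, hlen, hw₀⟩ := exists_reduced_word A w
  obtain ⟨w₁, t, rfl⟩ :=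
    List.eq_nil_or_concat' w₀ |>.resolve_left (by rintro rfl; simp at hlen; omega)
  refine ⟨t, ?_⟩
  have hcancel : wordAct A w₁ = wordAct A (w ++ [t]) := by
    rw [← wordAct_append_singleton_self hA w₁ t, wordAct_append, hw₀, wordAct_append]
  have := reducedLength_le hcancel
  simp only [List.length_append, List.length_singleton] at hlen
  omega

/-- Humphreys' reduction to the rank 2 parabolic subgroup generated by `s` and `t`: peel letters
`t, s, t, …` off the right of `w` for as long as this shortens it. -/
lemma exists_rank2_factorization (hA : IsCartan A) (w : List V)
    (ht : reducedLength A (w ++ [t]) < reducedLength A w) :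
    ∃ (u : List V) (k : ℕ), 0 < k ∧ reducedLength A u + k = reducedLength A w ∧
      wordAct A w = wordAct A (u ++ altWord t s k) ∧
      reducedLength A u < reducedLength A (u ++ [s]) ∧
      reducedLength A u < reducedLength A (u ++ [t]) := by
  set f := fun k => reducedLength A (w ++ (altWord t s k).reverse) with hf
  have hsucc (k : ℕ) : w ++ (altWord t s (k + 1)).reverse =
      w ++ (altWord t s k).reverse ++ [if Even k then t else s] := by
    simp [reverse_altWord_succ]
  obtain ⟨k, hk, hasc, hdesc⟩ := Nat.exists_first_ascent f fun k => by
    simp only [hf, hsucc]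
    exact reducedLength_append_singleton hA _ _
  obtain ⟨j, rfl⟩ : ∃ j, k = j + 1 := by
    refine Nat.exists_eq_succ_of_ne_zero ?_
    rintro rfl
    simp [hf, altWord] at hasc
    omega
  refine ⟨w ++ (altWord t s (j + 1)).reverse, j + 1, j.succ_pos,
    by simpa [hf, altWord] using hk, ?_, ?_⟩
  · rw [List.append_assoc, wordAct_append, wordAct_append, wordAct_reverse_mul hA, mul_one]
  have hnext : f (j + 2) = reducedLength A (w ++ (altWord t s (j + 1)).reverse ++
      [if Even (j + 1) then t else s]) := by
    simp only [hf, hsucc]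
  have hprev : f j = reducedLength A (w ++ (altWord t s (j + 1)).reverse ++
      [if Even j then t else s]) := by
    simp only [hf, hsucc]
    exact (reducedLength_congr (wordAct_append_singleton_self hA _ _)).symm
  have h₁ : f (j + 1) < f (j + 2) := hasc
  have h₂ : f (j + 1) < f j := hdesc j j.lt_succ_self
  by_cases hj : Even j
  · simp only [hj, Nat.even_add_one, not_true, ↓reduceIte] at hnext hprev
    exact ⟨hnext ▸ h₁, hprev ▸ h₂⟩
  · simp only [hj, Nat.even_add_one, not_false_eq_true, ↓reduceIte] at hnext hprev
    exact ⟨hprev ▸ h₂, hnext ▸ h₁⟩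

/-- Humphreys, *Reflection groups and Coxeter groups*, Theorem 5.4. -/
theorem wordAct_simpleRoot_nonneg (hA : IsCartan A) {w : List V} {s : V}
    (h : reducedLength A w < reducedLength A (w ++ [s])) : 0 ≤ wordAct A w (simpleRoot s) := by
  induction hn : reducedLength A w using Nat.strong_induction_on generalizing w s with
  | _ n ih =>
  rcases Nat.eq_zero_or_pos n with h0 | hpos
  · rw [reducedLength_eq_zero (hn.trans h0)]
    exact simpleRoot_nonneg s
  obtain ⟨t, ht⟩ := exists_reducedLength_append_lt hA (hn ▸ hpos)
  have hst : s ≠ t := by rintro rfl; omega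
  obtain ⟨u, k, hk, hlen, hw, hus, hut⟩ := exists_rank2_factorization (s := s) hA w ht
  rcases altWord_nonneg_or_exists_short hA hst k with ⟨c, d, hc, hd, hv⟩ | ⟨z, hz, hvz⟩
  · rw [hw, wordAct_append, Module.End.mul_apply, hv, map_add, map_zsmul, map_zsmul]
    exact add_nonneg (smul_nonneg hc (ih _ (by omega) hus rfl))
      (smul_nonneg hd (ih _ (by omega) hut rfl))
  · have hws : wordAct A (w ++ [s]) = wordAct A (u ++ z) := by
      rw [wordAct_append, hw, wordAct_append, mul_assoc, ← wordAct_append, hvz, wordAct_append]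
    have := reducedLength_append_le A u z
    rw [← reducedLength_congr hws] at this
    omega

lemma IsRoot.exists_eq_wordAct {α : V → ℤ} (h : IsRoot A α) :
    ∃ (w : List V) (v : V), α = wordAct A w (simpleRoot v) := by
  induction h with
  | simple v => exact ⟨[], v, rfl⟩
  | reflect v _ ih =>
    obtain ⟨w, u, rfl⟩ := ih
    exact ⟨v :: w, u, rfl⟩

theorem IsRoot.nonneg_or_nonpos (hA : IsCartan A) {α : V → ℤ} (h : IsRoot A α) :
    0 ≤ α ∨ α ≤ 0 := by
  obtain ⟨w, v, rfl⟩ := h.exists_eq_wordAct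
  rcases reducedLength_append_singleton hA w v with hup | hdown
  · exact Or.inl (wordAct_simpleRoot_nonneg hA (by omega))
  · right
    have hcancel := wordAct_append_singleton_self hA w v
    have hpos := wordAct_simpleRoot_nonneg hA (w := w ++ [v]) (s := v)
      (by rw [reducedLength_congr hcancel]; omega)
    rw [wordAct_append, Module.End.mul_apply, wordAct_singleton, sRefₗ_apply,
      sRef_simpleRoot_self hA, map_neg] at hpos
    exact neg_nonneg.mp hpos

end Positivity

section Geometry

open Submodule

variable {V : Type*} {A : V → V → ℤ} {i : V}

lemma coRef_involutive (hA : IsCartan A) : Function.Involutive (coRef A i) := fun f => by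
  funext v
  simp only [coRef, hA.diag]
  push_cast
  ring

section

variable [DecidableEq V]

lemma toR_simpleRoot (i : V) : toR (simpleRoot i) = Pi.single i 1 := by
  funext v
  by_cases h : v = i <;> simp [toR, simpleRoot, h]

lemma simpleRoot_not_mem_span_singleton {x : V → ℤ} {v : V} (hv : v ≠ i) (hx : x v ≠ 0) :
    toR (simpleRoot i) ∉ span ℝ {toR x} := by
  intro h
  obtain ⟨a, ha⟩ := mem_span_singleton.mp h
  have hav := congrFun ha v
  have hai := congrFun ha i
  simp [toR, simpleRoot, hv, hx] at hav hai
  simp [hav] at hai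

end

variable [Fintype V]

lemma pairing_eq_dotProduct (f : V → ℝ) (γ : V → ℤ) : pairing f γ = f ⬝ᵥ toR γ := rfl

lemma perp_inter_perp_subset {x γ δ : V → ℤ} (h : toR x ∈ span ℝ {toR γ, toR δ}) :
    perp γ ∩ perp δ ⊆ perp x := by
  rintro f ⟨hγ, hδ⟩
  obtain ⟨c, d, hcd⟩ := mem_span_pair.mp h
  simp only [perp, Set.mem_ofPred_eq, pairing_eq_dotProduct] at hγ hδ ⊢
  rw [← hcd, dotProduct_add, dotProduct_smul, dotProduct_smul, hγ, hδ, smul_zero, smul_zero,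
    add_zero]

lemma perp_inter_perp_eq_of_mem_span {x γ δ : V → ℤ} (h : toR x ∈ span ℝ {toR γ, toR δ})
    (hx : toR x ∉ span ℝ {toR δ}) : perp γ ∩ perp δ = perp x ∩ perp δ :=
  subset_antisymm (Set.subset_inter (perp_inter_perp_subset h) Set.inter_subset_right)
    (Set.subset_inter (perp_inter_perp_subset (mem_span_insert_exchange h hx))
      Set.inter_subset_right)

variable [DecidableEq V]

lemma pairing_simpleRoot (f : V → ℝ) (i : V) : pairing f (simpleRoot i) = f i := by
  rw [pairing_eq_dotProduct, toR_simpleRoot, dotProduct_single, mul_one]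

variable (A i)

def sRefR : (V → ℝ) →ₗ[ℝ] (V → ℝ) where
  toFun x := x - ((fun z => (A i z : ℝ)) ⬝ᵥ x) • toR (simpleRoot i)
  map_add' x y := by simp only [dotProduct_add]; module
  map_smul' c x := by simp only [dotProduct_smul, smul_eq_mul, RingHom.id_apply]; module

variable {A i}

lemma toR_sRef (γ : V → ℤ) : toR (sRef A i γ) = sRefR A i (toR γ) := by
  funext v
  simp [sRefR, sRef_eq, toR, dotProduct]

lemma toR_sRef_eq_sub (γ : V → ℤ) :
    toR (sRef A i γ) = toR γ - ((A i ⬝ᵥ γ : ℤ) : ℝ) • toR (simpleRoot i) := by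
  funext v
  simp [sRef_eq, toR]

lemma sRefR_involutive (hA : IsCartan A) : Function.Involutive (sRefR A i) := fun x => by
  simp only [sRefR, LinearMap.coe_mk, AddHom.coe_mk, dotProduct_sub, dotProduct_smul,
    toR_simpleRoot, dotProduct_single, hA.diag, smul_eq_mul]
  push_cast
  module

lemma sRef_mem_span_pair_iff (hA : IsCartan A) {x γ δ : V → ℤ} :
    toR (sRef A i x) ∈ span ℝ {toR (sRef A i γ), toR (sRef A i δ)} ↔
      toR x ∈ span ℝ {toR γ, toR δ} := by
  simp only [toR_sRef, ← Set.image_pair]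
  exact apply_mem_span_image_iff_mem_span (sRefR_involutive hA).injective

lemma simpleRoot_mem_span_sRef_iff (hA : IsCartan A) {γ δ : V → ℤ} :
    toR (simpleRoot i) ∈ span ℝ {toR (sRef A i γ), toR (sRef A i δ)} ↔
      toR (simpleRoot i) ∈ span ℝ {toR γ, toR δ} := by
  have h : toR (sRef A i (simpleRoot i)) = -toR (simpleRoot i) := by
    funext v
    simp [sRef_simpleRoot_self hA, toR]
  rw [← neg_mem_iff, ← h, sRef_mem_span_pair_iff hA]

lemma rootParallel_sRef_iff (hA : IsCartan A) {γ δ : V → ℤ} :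
    RootParallel (sRef A i γ) (sRef A i δ) ↔ RootParallel γ δ := by
  simp only [RootParallel, toR_sRef, ← map_smul, (sRefR_involutive hA).injective.eq_iff]

lemma pairing_coRef (f : V → ℝ) (γ : V → ℤ) :
    pairing (coRef A i f) γ = pairing f (sRef A i γ) := by
  have hcoRef : coRef A i f = f - f i • fun v => (A i v : ℝ) := by
    funext v
    simp [coRef, mul_comm]
  simp only [pairing_eq_dotProduct, toR_sRef, sRefR, hcoRef, LinearMap.coe_mk, AddHom.coe_mk,
    sub_dotProduct, dotProduct_sub, smul_dotProduct, dotProduct_smul, toR_simpleRoot,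
    dotProduct_single, smul_eq_mul, mul_one]
  ring

lemma image_coRef_perp_inter_perp (hA : IsCartan A) (γ δ : V → ℤ) :
    coRef A i '' (perp γ ∩ perp δ) = perp (sRef A i γ) ∩ perp (sRef A i δ) := by
  rw [(coRef_involutive hA).image_eq_preimage_symm]
  ext f
  simp [perp, pairing_coRef]

lemma perp_sRef_simpleRoot (hA : IsCartan A) :
    perp (sRef A i (simpleRoot i)) = perp (simpleRoot i) := by
  ext f
  simp [perp, pairing, sRef_simpleRoot_self hA]

end Geometry

section Fractures

open Submodule

variable {V : Type*} [Fintype V] [DecidableEq V] {A : V → V → ℤ} {i : V}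

lemma IsRoot.ne_zero (hA : IsCartan A) {α : V → ℤ} (h : IsRoot A α) : α ≠ 0 := by
  induction h with
  | simple v => exact fun h => by simpa [simpleRoot] using congrFun h v
  | @reflect v α _ ih =>
    intro h
    apply ih
    rw [← sRef_sRef hA v α, h, sRef_eq]
    simp

lemma simpleRoot_mem_posRoots (i : V) : simpleRoot i ∈ PosRoots A :=
  ⟨IsRoot.simple i, simpleRoot_nonneg i⟩

lemma sRef_mem_posRoots (hA : IsCartan A) {γ : V → ℤ} (hγ : γ ∈ PosRoots A)
    (hi : toR (simpleRoot i) ∉ span ℝ {toR γ}) : sRef A i γ ∈ PosRoots A := by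
  refine ⟨hγ.1.reflect i, ?_⟩
  refine ((hγ.1.reflect i).nonneg_or_nonpos hA).resolve_right fun hneg => hi ?_
  have hoff (v : V) (hv : v ≠ i) : γ v = 0 :=
    le_antisymm (sRef_apply_of_ne A hv γ ▸ hneg v) (hγ.2 v)
  have hγi : γ i ≠ 0 := fun h0 => hγ.1.ne_zero hA <| funext fun v => by
    by_cases hv : v = i
    · rw [hv, h0, Pi.zero_apply]
    · exact hoff v hv
  refine mem_span_singleton.mpr ⟨(γ i : ℝ)⁻¹, funext fun v => ?_⟩
  by_cases hv : v = i
  · subst hv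
    simp [toR, simpleRoot, hγi]
  · simp [toR, simpleRoot, hv, hoff v hv]

lemma sRef_mem_rank2Sub (hA : IsCartan A) {γ δ ρ : V → ℤ}
    (hU : toR (simpleRoot i) ∉ span ℝ {toR γ, toR δ}) (hρ : ρ ∈ rank2Sub A γ δ) :
    sRef A i ρ ∈ rank2Sub A (sRef A i γ) (sRef A i δ) :=
  ⟨sRef_mem_posRoots hA hρ.1 fun h => hU ((span_singleton_le_iff_mem _ _).mpr hρ.2 h),
    (sRef_mem_span_pair_iff hA).mpr hρ.2⟩

lemma IsBasicIn.map_sRef (hA : IsCartan A) {γ δ ρ : V → ℤ}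
    (hU : toR (simpleRoot i) ∉ span ℝ {toR γ, toR δ}) (h : IsBasicIn (rank2Sub A γ δ) ρ) :
    IsBasicIn (rank2Sub A (sRef A i γ) (sRef A i δ)) (sRef A i ρ) := by
  obtain ⟨hρ, f, hf, hpos⟩ := h
  have hU' : toR (simpleRoot i) ∉ span ℝ {toR (sRef A i γ), toR (sRef A i δ)} := by
    rwa [simpleRoot_mem_span_sRef_iff hA]
  refine ⟨sRef_mem_rank2Sub hA hU hρ, coRef A i f, by rwa [pairing_coRef, sRef_sRef hA], ?_⟩
  intro ε hε hpar
  have hε' := sRef_mem_rank2Sub hA hU' hε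
  rw [sRef_sRef hA, sRef_sRef hA] at hε'
  rw [pairing_coRef]
  refine hpos _ hε' fun hp => hpar ?_
  simpa only [sRef_sRef hA] using (rootParallel_sRef_iff (i := i) hA).mpr hp

lemma Cuts.map_sRef (hA : IsCartan A) {γ δ : V → ℤ}
    (hU : toR (simpleRoot i) ∉ span ℝ {toR γ, toR δ}) (h : Cuts A γ δ) :
    Cuts A (sRef A i γ) (sRef A i δ) := by
  refine ⟨h.1.map_sRef hA hU, fun hb => h.2 ?_⟩
  have hU' : toR (simpleRoot i) ∉ span ℝ {toR (sRef A i γ), toR (sRef A i δ)} := by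
    rwa [simpleRoot_mem_span_sRef_iff hA]
  simpa only [sRef_sRef hA] using hb.map_sRef hA hU'

lemma isFracture_sRef (hA : IsCartan A) {γ δ : V → ℤ} (hγ : γ ∈ PosRoots A)
    (hU : toR (simpleRoot i) ∉ span ℝ {toR γ, toR δ}) (h : Cuts A γ δ) :
    IsFracture A (sRef A i δ) (perp (sRef A i γ) ∩ perp (sRef A i δ)) :=
  ⟨_, sRef_mem_posRoots hA hγ fun h' =>
    hU ((span_singleton_le_iff_mem _ _).mpr (subset_span (Set.mem_insert _ _)) h'),
    h.map_sRef hA hU, rfl⟩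

variable {β β' : V → ℤ}

lemma exists_apply_ne_zero_of_covers (hA : IsCartan A) (hβ' : β' ∈ PosRoots A)
    (h1 : β = sRef A i β') (h2 : β' i < β i) : ∃ v ≠ i, β' v ≠ 0 := by
  by_contra! h
  have hβ'single : β' = Pi.single i (β' i) := funext fun v => by
    by_cases hv : v = i
    · subst hv; simp
    · simp [hv, h v hv]
  have hβi : β i = -β' i := by
    rw [h1, sRef_eq, hβ'single]
    simp [dotProduct_single, hA.diag, simpleRoot]
    ring
  linarith [hβ'.2 i]

lemma simpleRoot_not_mem_span_of_covers (hA : IsCartan A) (hβ' : β' ∈ PosRoots A)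
    (h1 : β = sRef A i β') (h2 : β' i < β i) :
    toR (simpleRoot i) ∉ span ℝ {toR β} ∧ toR (simpleRoot i) ∉ span ℝ {toR β'} := by
  obtain ⟨v, hv, hβ'v⟩ := exists_apply_ne_zero_of_covers hA hβ' h1 h2
  have hβv : β v ≠ 0 := by rwa [h1, sRef_apply_of_ne A hv]
  exact ⟨simpleRoot_not_mem_span_singleton hv hβv, simpleRoot_not_mem_span_singleton hv hβ'v⟩

lemma pairing_indicator_pos {δ : V → ℤ} (hδ : 0 ≤ δ) (hpar : ¬ RootParallel δ (simpleRoot i)) :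
    0 < pairing (fun v => if v = i then 0 else 1) δ := by
  obtain ⟨v, hv, hδv⟩ : ∃ v ≠ i, δ v ≠ 0 := by
    by_contra! h
    refine hpar ⟨δ i, funext fun v => ?_⟩
    by_cases hv : v = i
    · subst hv
      simp [toR, simpleRoot]
    · simp [toR, simpleRoot, hv, h v hv]
  refine Finset.sum_pos' (fun u _ => ?_) ⟨v, Finset.mem_univ v, ?_⟩
  · exact mul_nonneg (by dsimp only; split_ifs <;> norm_num) (by exact_mod_cast hδ u)
  · simpa [hv] using (hδ v).lt_of_ne' hδv

lemma cuts_simpleRoot (hA : IsCartan A) (hβ' : β' ∈ PosRoots A)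
    (h1 : β = sRef A i β') (h2 : β' i < β i) : Cuts A (simpleRoot i) β := by
  have hα : simpleRoot i ∈ rank2Sub A (simpleRoot i) β :=
    ⟨simpleRoot_mem_posRoots i, subset_span (Set.mem_insert _ _)⟩
  refine ⟨⟨hα, fun v => if v = i then 0 else 1, by simp [pairing_simpleRoot],
    fun δ hδ hpar => pairing_indicator_pos hδ.1.2 hpar⟩, ?_⟩
  rintro ⟨-, f, hf, hpos⟩
  have hαβ : ¬ RootParallel (simpleRoot i) β := fun ⟨c, hc⟩ =>
    (simpleRoot_not_mem_span_of_covers hA hβ' h1 h2).1 (mem_span_singleton.mpr ⟨c, hc.symm⟩)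
  -- `β' = β + c αᵢ` with `c < 0`, so `f` cannot vanish on `β` and be positive on `αᵢ` and `β'`
  have hc : A i ⬝ᵥ β' < 0 := by
    have := congrFun h1 i
    simp [sRef_eq, simpleRoot] at this
    linarith
  have hrel : toR β' = toR β + ((A i ⬝ᵥ β' : ℤ) : ℝ) • toR (simpleRoot i) := by
    rw [h1, toR_sRef_eq_sub]
    abel
  have hβ'mem : β' ∈ rank2Sub A (simpleRoot i) β :=
    ⟨hβ', mem_span_pair.mpr ⟨((A i ⬝ᵥ β' : ℤ) : ℝ), 1, by rw [hrel, one_smul, add_comm]⟩⟩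
  have hneg : pairing f β' < 0 := by
    rw [pairing_eq_dotProduct, hrel, dotProduct_add, dotProduct_smul, ← pairing_eq_dotProduct,
      ← pairing_eq_dotProduct, hf, zero_add, smul_eq_mul]
    exact mul_neg_of_neg_of_pos (by exact_mod_cast hc) (hpos _ hα hαβ)
  by_cases hpar : RootParallel β' β
  · obtain ⟨u, hu⟩ := hpar
    rw [pairing_eq_dotProduct, hu, dotProduct_smul, ← pairing_eq_dotProduct, hf, smul_zero] at hneg
    exact hneg.false
  · exact (hpos _ hβ'mem hpar).not_gt hneg

end Fractures

theorem fracture_induction_step_general {V : Type*} [Fintype V] [DecidableEq V]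
    (A : V → V → ℤ) (hA : IsCartan A) (i : V) (β β' : V → ℤ)
    (hβ' : β' ∈ PosRoots A)
    (h1 : β = sRef A i β') (h2 : β' i < β i) :
    {F | IsFracture A β F} =
      insert (perp (simpleRoot i) ∩ perp β)
        ((fun F => coRef A i '' F) '' {F | IsFracture A β' F}) := by
  have hsβ : sRef A i β = β' := by rw [h1, sRef_sRef hA]
  obtain ⟨hβi, hβ'i⟩ := simpleRoot_not_mem_span_of_covers hA hβ' h1 h2
  have hcut := cuts_simpleRoot hA hβ' h1 h2
  ext F
  simp only [Set.mem_ofPred_eq, Set.mem_insert_iff, Set.mem_image]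
  constructor
  · rintro ⟨γ, hγ, hγβ, rfl⟩
    by_cases hU : toR (simpleRoot i) ∈ Submodule.span ℝ {toR γ, toR β}
    · exact Or.inl (perp_inter_perp_eq_of_mem_span hU hβi)
    · have hF := isFracture_sRef hA hγ hU hγβ
      rw [hsβ] at hF
      refine Or.inr ⟨_, hF, ?_⟩
      rw [image_coRef_perp_inter_perp hA, sRef_sRef hA, ← hsβ, sRef_sRef hA]
  · rintro (rfl | ⟨_, ⟨γ, hγ, hγβ', rfl⟩, rfl⟩)
    · exact ⟨_, simpleRoot_mem_posRoots i, hcut, rfl⟩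
    by_cases hU : toR (simpleRoot i) ∈ Submodule.span ℝ {toR γ, toR β'}
    · rw [perp_inter_perp_eq_of_mem_span hU hβ'i,
        image_coRef_perp_inter_perp hA, perp_sRef_simpleRoot hA, ← h1]
      exact ⟨_, simpleRoot_mem_posRoots i, hcut, rfl⟩
    · rw [image_coRef_perp_inter_perp hA, h1]
      exact isFracture_sRef hA hγ hU hγβ'

/-- if `β = sᵢ β'` with `β - β'` a positive multiple of `αᵢ`, then the
fractures of `β^⊥` are `αᵢ^⊥ ∩ β^⊥` together with the images under `sᵢ` of the
fractures of `(β')^⊥`. -/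
theorem fracture_induction_step {V : Type*} [Fintype V] [DecidableEq V]
    (A : V → V → ℤ) (hA : IsCartan A) (i : V) (β β' : V → ℤ)
    (hβ' : β' ∈ PosRoots A) (hβ : β ∈ PosRoots A)
    (h1 : β = sRef A i β') (h2 : β' i < β i) :
    {F | IsFracture A β F} =
      insert (perp (simpleRoot i) ∩ perp β)
        ((fun F => coRef A i '' F) '' {F | IsFracture A β' F}) :=
  fracture_induction_step_general A hA i β β' hβ' h1 h2
end
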